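/- arXiv:1106.0423 — 9 statements merged into one kernel-verified Lean document; each statement's English description precedes it below -/
import Mathlib

section
/- In the parallel-link Physarum dynamics with lengths L₁ < L₂ < … < Lₘ, the function V = Σ_{i≥2} (Lᵢ·ln Dᵢ - L₁·ln D₁) satisfies V' = Σ_{i≥2}(L₁ - Lᵢ) < 0 along any trajectory with all Dᵢ > 0. -/
open Real Finset

/-!
Along the flow `Dᵢ' = Dᵢ (Δ / Lᵢ - 1)` each logarithm satisfies `(Lᵢ ln Dᵢ)' = Δ - Lᵢ`, so in every
summand `Lᵢ ln Dᵢ - L₁ ln D₁` of `V` the common, state-dependent factor `Δ` cancels and the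
derivative is the constant `L₁ - Lᵢ`, negative because the lengths increase.
-/

theorem hasDerivAt_log_of_eq_mul {f : ℝ → ℝ} {r t : ℝ} (hf : HasDerivAt f (f t * r) t)
    (ht : f t ≠ 0) : HasDerivAt (fun s => log (f s)) r t := by
  convert hf.log ht using 1
  field_simp

theorem hasDerivAt_const_mul_log_of_physarum {f : ℝ → ℝ} {ℓ Δ t : ℝ}
    (hf : HasDerivAt f (f t * Δ / ℓ - f t) t) (hℓ : ℓ ≠ 0) (ht : f t ≠ 0) :
    HasDerivAt (fun s => ℓ * log (f s)) (Δ - ℓ) t := by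
  have hlog : HasDerivAt (fun s => log (f s)) (Δ / ℓ - 1) t :=
    hasDerivAt_log_of_eq_mul (hf.congr_deriv (by ring)) ht
  refine (hlog.const_mul ℓ).congr_deriv ?_
  rw [mul_sub, mul_div_cancel₀ Δ hℓ, mul_one]

theorem Fin.sum_erase_zero_sub_neg {m : ℕ} {L : Fin (m + 2) → ℝ} (hL : StrictMono L) :
    ∑ i ∈ univ.erase 0, (L 0 - L i) < 0 := by
  refine sum_neg (fun i hi => sub_neg.mpr (hL (Fin.pos_of_ne_zero (ne_of_mem_erase hi)))) ?_
  exact ⟨1, mem_erase.mpr ⟨one_ne_zero, mem_univ _⟩⟩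

/-- In the parallel-link Physarum dynamics (`Dᵢ' = Qᵢ - Dᵢ`,
`Qᵢ = Dᵢ·Δ/Lᵢ`, `Δ = 1/Σⱼ Dⱼ/Lⱼ`) with strictly increasing positive lengths
and at least two links, the function
`V = Σ_{i≥2} (Lᵢ·ln Dᵢ - L₁·ln D₁)` satisfies `V' = Σ_{i≥2}(L₁ - Lᵢ) < 0`
along any trajectory with all `Dᵢ > 0`. -/
theorem parallel_links_lyapunov (m : ℕ) (L : Fin (m + 2) → ℝ)
    (hL : ∀ i, 0 < L i) (hLmono : StrictMono L)
    (D : ℝ → Fin (m + 2) → ℝ) (hpos : ∀ t i, 0 < D t i)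
    (hdyn : ∀ t i, HasDerivAt (fun s => D s i)
      (D t i * (∑ j, D t j / L j)⁻¹ / L i - D t i) t) :
    ∀ t, HasDerivAt
        (fun s => ∑ i ∈ univ.erase 0, (L i * log (D s i) - L 0 * log (D s 0)))
        (∑ i ∈ univ.erase 0, (L 0 - L i)) t ∧
      (∑ i ∈ univ.erase 0, (L 0 - L i)) < 0 := by
  intro t
  have hweighted : ∀ i, HasDerivAt (fun s => L i * log (D s i))
      ((∑ j, D t j / L j)⁻¹ - L i) t := fun i =>
    hasDerivAt_const_mul_log_of_physarum (hdyn t i) (hL i).ne' (hpos t i).ne'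
  refine ⟨HasDerivAt.fun_sum fun i _ => ?_, Fin.sum_erase_zero_sub_neg hLmono⟩
  exact ((hweighted i).sub (hweighted 0)).congr_deriv (by ring)
end

section
/- In the parallel-link Physarum dynamics with lengths L₁ < L₂ < … < Lₘ and all Dᵢ(0) > 0, the fraction x₁ = D₁/(Σᵢ Dᵢ) converges to 1 as t → ∞; hence D₁ → 1 and Dᵢ → 0 for i ≥ 2. -/
open Real Finset Filter

/-!
While all conductances are positive, `Dᵢ' ≥ -Dᵢ`, so no `Dᵢ` can reach zero in finite time.
The total conductance `W = Σ Dᵢ` obeys `W' = 1 - W`, hence `W → 1` and `W ≤ max (W 0) 1`, which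
bounds the pressure `Δ` below by `δ = L₁ / max (W 0) 1`. For `i ≥ 2` the ratio `r = Dᵢ / D₁`
satisfies `r' = r Δ (1/Lᵢ - 1/L₁) ≤ -δ (1/L₁ - 1/Lᵢ) r`, so it decays exponentially, and then
`1 / x₁ = Σⱼ Dⱼ / D₁ → 1`.
-/

theorem le_mul_exp_of_hasDerivAt_le {f f' : ℝ → ℝ} {K a b : ℝ}
    (hf : ∀ x ∈ Set.Icc a b, HasDerivAt f (f' x) x) (bound : ∀ x ∈ Set.Ico a b, f' x ≤ K * f x) :
    ∀ x ∈ Set.Icc a b, f x ≤ f a * exp (K * (x - a)) := by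
  intro x hx
  have := le_gronwallBound_of_liminf_deriv_right_le (f := f) (f' := f') (ε := 0)
    (fun y hy => (hf y hy).continuousAt.continuousWithinAt)
    (fun y hy r hr => (hf y (Set.Ico_subset_Icc_self hy)).hasDerivWithinAt.liminf_right_slope_le hr)
    le_rfl (by simpa using bound) x hx
  rwa [gronwallBound_ε0] at this

theorem eq_mul_exp_of_hasDerivAt {f : ℝ → ℝ} {K a : ℝ}
    (hf : ∀ x ∈ Set.Ici a, HasDerivAt f (K * f x) x) :
    ∀ x ∈ Set.Ici a, f x = f a * exp (K * (x - a)) := by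
  intro x hx
  have hIcc : ∀ y ∈ Set.Icc a x, y ∈ Set.Ici a := fun y hy => hy.1
  refine le_antisymm (le_mul_exp_of_hasDerivAt_le (fun y hy => hf y (hIcc y hy))
    (fun _ _ => le_rfl) x ⟨hx, le_rfl⟩) ?_
  have := le_mul_exp_of_hasDerivAt_le (f := fun y => -f y) (K := K)
    (fun y hy => (hf y (hIcc y hy)).neg) (fun y _ => (mul_neg K (f y)).symm.le) x ⟨hx, le_rfl⟩
  linarith

theorem forall_pos_of_forall_pos_Ico {ι : Type*} [Finite ι] {g : ℝ → ι → ℝ}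
    (hg : ∀ i, ContinuousOn (fun t => g t i) (Set.Ici 0)) (h0 : ∀ i, 0 < g 0 i)
    (step : ∀ T, 0 < T → (∀ s ∈ Set.Ico 0 T, ∀ i, 0 < g s i) → ∀ i, 0 < g T i) :
    ∀ t, 0 ≤ t → ∀ i, 0 < g t i := by
  by_contra! ⟨t₀, ht₀, i₀, hi₀⟩
  -- `sInf C` is the first time at which some component fails to be positive.
  set C := ⋃ i, Set.Ici 0 ∩ (fun t => g t i) ⁻¹' Set.Iic 0
  have hC : IsClosed C := isClosed_iUnion_of_finite fun i =>
    (hg i).preimage_isClosed_of_isClosed isClosed_Ici isClosed_Iic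
  have hCbdd : BddBelow C := ⟨0, by simp +contextual [C, mem_lowerBounds]⟩
  obtain ⟨i, hT0, hTi⟩ :=
    Set.mem_iUnion.1 (hC.csInf_mem ⟨t₀, Set.mem_iUnion.2 ⟨i₀, ht₀, hi₀⟩⟩ hCbdd)
  have hT : 0 < sInf C := hT0.lt_of_ne fun h => (h0 i).not_ge (h ▸ hTi)
  refine (step _ hT (fun s hs j => ?_) i).not_ge hTi
  by_contra! hsj
  exact hs.2.not_ge (csInf_le hCbdd (Set.mem_iUnion.2 ⟨j, hs.1, hsj⟩))

section Physarum

variable {ι : Type*} [Fintype ι]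

-- `Δ` of the paper: the pressure difference driving a unit total flow through the links.
noncomputable def physarumPressure (L d : ι → ℝ) : ℝ := (∑ j, d j / L j)⁻¹

noncomputable def physarumField (L d : ι → ℝ) (i : ι) : ℝ :=
  d i * physarumPressure L d / L i - d i

theorem physarumPressure_nonneg {L d : ι → ℝ} (hL : ∀ j, 0 ≤ L j) (hd : ∀ j, 0 ≤ d j) :
    0 ≤ physarumPressure L d :=
  inv_nonneg.2 (Finset.sum_nonneg fun j _ => div_nonneg (hd j) (hL j))

theorem div_sum_le_physarumPressure {L d : ι → ℝ} {k : ι} (hL : ∀ j, 0 < L j)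
    (hk : ∀ j, L k ≤ L j) (hd : ∀ j, 0 < d j) : L k / ∑ j, d j ≤ physarumPressure L d := by
  have hS : 0 < ∑ j, d j / L j := Finset.sum_pos (fun j _ => div_pos (hd j) (hL j)) ⟨k, mem_univ k⟩
  have hSW : ∑ j, d j / L j ≤ (∑ j, d j) / L k := by
    rw [Finset.sum_div]
    exact Finset.sum_le_sum fun j _ => div_le_div_of_nonneg_left (hd j).le (hL k) (hk j)
  rw [physarumPressure, ← inv_div]
  exact inv_anti₀ hS hSW

theorem neg_le_physarumField {L d : ι → ℝ} (hL : ∀ j, 0 ≤ L j) (hd : ∀ j, 0 ≤ d j) (i : ι) :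
    -d i ≤ physarumField L d i := by
  have := div_nonneg (mul_nonneg (hd i) (physarumPressure_nonneg hL hd)) (hL i)
  unfold physarumField
  linarith

theorem sum_physarumField {L d : ι → ℝ} (hS : ∑ j, d j / L j ≠ 0) :
    ∑ i, physarumField L d i = 1 - ∑ i, d i := by
  have : ∑ i, d i * physarumPressure L d / L i = (∑ i, d i / L i) * physarumPressure L d := by
    rw [Finset.sum_mul]
    exact Finset.sum_congr rfl fun i _ => by ring
  simp only [physarumField, Finset.sum_sub_distrib]
  rw [this, physarumPressure, mul_inv_cancel₀ hS]

theorem physarumField_mul_sub_mul_physarumField (L d : ι → ℝ) (i k : ι) :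
    physarumField L d i * d k - d i * physarumField L d k =
      d i * d k * (physarumPressure L d * (1 / L i - 1 / L k)) := by
  simp only [physarumField]
  ring

variable {L : ι → ℝ} {D : ℝ → ι → ℝ}
  (hdyn : ∀ t i, 0 ≤ t → HasDerivAt (fun s => D s i) (physarumField L (D t) i) t)
include hdyn

theorem physarum_pos (hL : ∀ j, 0 ≤ L j) (hD0 : ∀ i, 0 < D 0 i) :
    ∀ t, 0 ≤ t → ∀ i, 0 < D t i := by
  refine forall_pos_of_forall_pos_Ico
    (fun i t ht => (hdyn t i ht).continuousAt.continuousWithinAt) hD0 fun T hT hpos i => ?_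
  have hIcc : ∀ t ∈ Set.Icc 0 T, 0 ≤ t := fun t ht => ht.1
  have := le_mul_exp_of_hasDerivAt_le (f := fun t => -D t i) (K := -1)
    (fun t ht => (hdyn t i (hIcc t ht)).neg)
    (fun t ht => by linarith [neg_le_physarumField hL (fun j => (hpos t ht j).le) i])
    T ⟨hT.le, le_rfl⟩
  have := mul_pos (hD0 i) (exp_pos (-1 * (T - 0)))
  linarith

variable (hpos : ∀ t, 0 ≤ t → ∀ i, 0 < D t i)
include hpos

theorem hasDerivAt_physarum_ratio (i k : ι) (t : ℝ) (ht : 0 ≤ t) :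
    HasDerivAt (fun s => D s i / D s k)
      (D t i / D t k * (physarumPressure L (D t) * (1 / L i - 1 / L k))) t := by
  refine ((hdyn t i ht).div (hdyn t k ht) (hpos t ht k).ne').congr_deriv ?_
  rw [physarumField_mul_sub_mul_physarumField]
  field_simp

variable [Nonempty ι] (hL : ∀ j, 0 < L j)
include hL

theorem physarum_sum_eq (t : ℝ) (ht : 0 ≤ t) :
    ∑ i, D t i = 1 + (∑ i, D 0 i - 1) * exp (-t) := by
  have hderiv (s : ℝ) (hs : 0 ≤ s) :
      HasDerivAt (fun s => ∑ i, D s i - 1) (-1 * (∑ i, D s i - 1)) s := by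
    have hS : ∑ j, D s j / L j ≠ 0 :=
      (Finset.sum_pos (fun j _ => div_pos (hpos s hs j) (hL j)) univ_nonempty).ne'
    refine ((HasDerivAt.fun_sum fun i _ => hdyn s i hs).sub_const 1).congr_deriv ?_
    rw [sum_physarumField hS]
    ring
  have := eq_mul_exp_of_hasDerivAt hderiv t ht
  simp only [sub_zero, neg_one_mul] at this
  linarith

theorem physarum_sum_le (t : ℝ) (ht : 0 ≤ t) : ∑ i, D t i ≤ max (∑ i, D 0 i) 1 := by
  have he : exp (-t) ≤ 1 := exp_le_one_iff.2 (neg_nonpos.2 ht)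
  have h1 := mul_le_mul_of_nonneg_left (le_max_right (∑ i, D 0 i) 1) (sub_nonneg.2 he)
  have h2 := mul_le_mul_of_nonneg_left (le_max_left (∑ i, D 0 i) 1) (exp_pos (-t)).le
  rw [physarum_sum_eq hdyn hpos hL t ht]
  linarith

theorem tendsto_physarum_sum : Tendsto (fun t => ∑ i, D t i) atTop (nhds 1) := by
  have := (tendsto_exp_neg_atTop_nhds_zero.const_mul (∑ i, D 0 i - 1)).const_add 1
  rw [mul_zero, add_zero] at this
  exact this.congr' <| (eventually_ge_atTop 0).mono fun t ht =>
    (physarum_sum_eq hdyn hpos hL t ht).symm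

theorem physarum_ratio_le {i k : ι} (hk : ∀ j, L k ≤ L j) (t : ℝ) (ht : 0 ≤ t) :
    D t i / D t k ≤
      D 0 i / D 0 k * exp (-(L k / max (∑ j, D 0 j) 1 * (1 / L k - 1 / L i) * t)) := by
  set δ := L k / max (∑ j, D 0 j) 1
  have hIcc : ∀ s ∈ Set.Icc 0 t, 0 ≤ s := fun s hs => hs.1
  have := le_mul_exp_of_hasDerivAt_le (f := fun s => D s i / D s k)
    (K := -(δ * (1 / L k - 1 / L i)))
    (fun s hs => hasDerivAt_physarum_ratio hdyn hpos i k s (hIcc s hs)) (fun s hs => ?_)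
    t ⟨ht, le_rfl⟩
  · simpa using this
  have hs : 0 ≤ s := hs.1
  have hΔ : δ ≤ physarumPressure L (D s) :=
    (div_le_div_of_nonneg_left (hL k).le (Finset.sum_pos (fun j _ => hpos s hs j) univ_nonempty)
      (physarum_sum_le hdyn hpos hL s hs)).trans
      (div_sum_le_physarumPressure hL hk (hpos s hs))
  have ha : 1 / L i - 1 / L k ≤ 0 := sub_nonpos.2 (one_div_le_one_div_of_le (hL k) (hk i))
  have := mul_le_mul_of_nonneg_left (mul_le_mul_of_nonpos_right hΔ ha)
    (div_pos (hpos s hs i) (hpos s hs k)).le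
  linarith

theorem tendsto_physarum_ratio {i k : ι} (hk : ∀ j, L k ≤ L j) (hki : L k < L i) :
    Tendsto (fun t => D t i / D t k) atTop (nhds 0) := by
  have hc : 0 < L k / max (∑ j, D 0 j) 1 * (1 / L k - 1 / L i) :=
    mul_pos (div_pos (hL k) (lt_max_of_lt_right one_pos))
      (sub_pos.2 (one_div_lt_one_div_of_lt (hL k) hki))
  have hdecay := (tendsto_exp_neg_atTop_nhds_zero.comp
    (tendsto_id.const_mul_atTop hc)).const_mul (D 0 i / D 0 k)
  rw [mul_zero] at hdecay
  refine tendsto_of_tendsto_of_tendsto_of_le_of_le' tendsto_const_nhds hdecay ?_ ?_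
  · exact (eventually_ge_atTop 0).mono fun t ht => (div_pos (hpos t ht i) (hpos t ht k)).le
  · exact (eventually_ge_atTop 0).mono (physarum_ratio_le hdyn hpos hL hk)

theorem tendsto_physarum_fraction {k : ι} (hk : ∀ j ≠ k, L k < L j) :
    Tendsto (fun t => D t k / ∑ i, D t i) atTop (nhds 1) := by
  have hk' : ∀ j, L k ≤ L j := fun j => by
    rcases eq_or_ne j k with rfl | hj
    exacts [le_rfl, (hk j hj).le]
  classical
  have hsum : Tendsto (fun t => 1 + ∑ j ∈ univ.erase k, D t j / D t k) atTop (nhds 1) := by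
    simpa only [Finset.sum_const_zero, add_zero] using (tendsto_finsetSum (univ.erase k) fun j hj =>
      tendsto_physarum_ratio hdyn hpos hL hk' (hk j (ne_of_mem_erase hj))).const_add 1
  rw [← inv_one]
  refine (hsum.inv₀ one_ne_zero).congr' <| (eventually_ge_atTop 0).mono fun t ht => ?_
  have := Finset.add_sum_erase univ (fun j => D t j / D t k) (mem_univ k)
  dsimp only at this ⊢
  rw [← div_self (hpos t ht k).ne', this, ← Finset.sum_div, inv_div]

end Physarum

/-- In the parallel-link Physarum dynamics (`Dᵢ' = Qᵢ - Dᵢ`, `Qᵢ = Dᵢ·Δ/Lᵢ`,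
`Δ = 1/Σⱼ Dⱼ/Lⱼ`) with strictly increasing positive lengths and all
`Dᵢ(0) > 0`, the fraction `x₁ = D₁/Σᵢ Dᵢ` converges to `1`; hence `D₁ → 1`
and `Dᵢ → 0` for `i ≥ 2`. -/
theorem parallel_links_convergence (m : ℕ) (L : Fin (m + 1) → ℝ)
    (hL : ∀ i, 0 < L i) (hLmono : StrictMono L)
    (D : ℝ → Fin (m + 1) → ℝ) (hD0 : ∀ i, 0 < D 0 i)
    (hdyn : ∀ t i, 0 ≤ t → HasDerivAt (fun s => D s i)
      (D t i * (∑ j, D t j / L j)⁻¹ / L i - D t i) t) :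
    Tendsto (fun t => D t 0 / ∑ i, D t i) atTop (nhds 1) ∧
    Tendsto (fun t => D t 0) atTop (nhds 1) ∧
    ∀ i, i ≠ 0 → Tendsto (fun t => D t i) atTop (nhds 0) := by
  have hpos := physarum_pos hdyn (fun j => (hL j).le) hD0
  have hshortest (j : Fin (m + 1)) (hj : j ≠ 0) : L 0 < L j := hLmono (Fin.pos_of_ne_zero hj)
  have hx := tendsto_physarum_fraction hdyn hpos hL hshortest
  have hD : Tendsto (fun t => D t 0) atTop (nhds 1) := by
    simpa using (hx.mul (tendsto_physarum_sum hdyn hpos hL)).congr' <|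
      (eventually_ge_atTop 0).mono fun t ht =>
        div_mul_cancel₀ _ (Finset.sum_pos (fun j _ => hpos t ht j) univ_nonempty).ne'
  refine ⟨hx, hD, fun i hi => ?_⟩
  simpa using ((tendsto_physarum_ratio hdyn hpos hL (fun j => hLmono.monotone (Fin.zero_le j))
    (hshortest i hi)).mul hD).congr' <|
      (eventually_ge_atTop 0).mono fun t ht => div_mul_cancel₀ _ (hpos t ht 0).ne'
end

section
/- In an electrical network (undirected graph with positive resistances) carrying a unit s₀-s₁ flow Q determined by node potentials via Ohm's law, the magnitude of the current on every edge satisfies |Q_e| ≤ 1. -/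
open Finset

/-- In an electrical network carrying a unit `s₀`-`s₁` current determined by
node potentials via Ohm's law, the current on every edge satisfies
`|Q_e| ≤ 1`. -/
theorem edge_current_le_one {V : Type*} [Fintype V] [DecidableEq V]
    (Adj : V → V → Prop) [DecidableRel Adj]
    (hsymm : ∀ u v, Adj u v → Adj v u)
    (hirrefl : ∀ v, ¬ Adj v v)
    (R : V → V → ℝ) (hR : ∀ u v, Adj u v → 0 < R u v)
    (hRsymm : ∀ u v, R u v = R v u)
    (s₀ s₁ : V) (hne : s₀ ≠ s₁)
    (p : V → ℝ)
    (Q : V → V → ℝ)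
    (hQ : ∀ u v, Q u v = if Adj u v then (p u - p v) / R u v else 0)
    (hkirchhoff : ∀ v, ∑ u, Q v u =
      if v = s₀ then 1 else if v = s₁ then -1 else 0) :
    ∀ u v, |Q u v| ≤ 1 := by
  have hanti : ∀ u v, Q u v = - Q v u := by
    intro u v
    rw [hQ, hQ]
    by_cases h : Adj u v
    · rw [if_pos h, if_pos (hsymm u v h), hRsymm u v, ← neg_div, neg_sub]
    · have h' : ¬ Adj v u := fun hh => h (hsymm v u hh)
      simp [h, h']
  have key : ∀ u v, Q u v ≤ 1 := by
    intro u v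
    by_cases hpos : 0 < Q u v
    · have hadj : Adj u v := by
        by_contra h
        rw [hQ, if_neg h] at hpos
        exact lt_irrefl _ hpos
      have hr := hR u v hadj
      have hpuv : p v < p u := by
        rw [hQ, if_pos hadj] at hpos
        rcases div_pos_iff.mp hpos with ⟨h1, _⟩ | ⟨_, h2⟩
        · linarith
        · linarith
      set S : Finset V := univ.filter (fun w => p u ≤ p w) with hS
      have huS : u ∈ S := by simp [hS]
      have hvS : v ∈ Sᶜ := by simp [hS]; linarith
      have hnonneg : ∀ w ∈ S, ∀ x ∈ Sᶜ, 0 ≤ Q w x := by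
        intro w hw x hx
        simp only [hS, mem_filter, mem_univ, true_and] at hw
        simp only [hS, mem_compl, mem_filter, mem_univ, true_and, not_le] at hx
        rw [hQ]
        by_cases h : Adj w x
        · rw [if_pos h]
          have hr' := hR w x h
          have hlt : p x < p w := lt_of_lt_of_le hx hw
          apply div_nonneg (by linarith) hr'.le
        · rw [if_neg h]
      -- sum Kirchhoff over S
      have hA : ∑ w ∈ S, ∑ x, Q w x ≤ 1 := by
        have : ∑ w ∈ S, ∑ x, Q w x
            = ∑ w ∈ S, (if w = s₀ then (1:ℝ) else if w = s₁ then -1 else 0) := by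
          exact Finset.sum_congr rfl fun w _ => hkirchhoff w
        rw [this]
        calc ∑ w ∈ S, (if w = s₀ then (1:ℝ) else if w = s₁ then -1 else 0)
            ≤ ∑ w ∈ S, (if w = s₀ then (1:ℝ) else 0) := by
              apply Finset.sum_le_sum
              intro w _
              by_cases h0 : w = s₀
              · simp [h0]
              · simp only [if_neg h0]
                split <;> norm_num
          _ = if s₀ ∈ S then 1 else 0 := Finset.sum_ite_eq' S s₀ (fun _ => (1:ℝ))
          _ ≤ 1 := by split <;> norm_num
      have hzero : ∑ w ∈ S, ∑ x ∈ S, Q w x = 0 := by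
        have h1 : ∑ w ∈ S, ∑ x ∈ S, Q w x = ∑ x ∈ S, ∑ w ∈ S, Q w x :=
          Finset.sum_comm
        have h2 : ∑ x ∈ S, ∑ w ∈ S, Q w x = - ∑ w ∈ S, ∑ x ∈ S, Q w x := by
          rw [← Finset.sum_neg_distrib]
          apply Finset.sum_congr rfl
          intro x _
          rw [← Finset.sum_neg_distrib]
          apply Finset.sum_congr rfl
          intro w _
          exact (hanti w x).symm ▸ (hanti w x) ▸ rfl
        linarith [h1, h2]
      have hsplit : ∑ w ∈ S, ∑ x, Q w x
          = ∑ w ∈ S, ∑ x ∈ S, Q w x + ∑ w ∈ S, ∑ x ∈ Sᶜ, Q w x := by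
        rw [← Finset.sum_add_distrib]
        apply Finset.sum_congr rfl
        intro w _
        exact (Finset.sum_add_sum_compl S fun x => Q w x).symm
      have hcut : ∑ w ∈ S, ∑ x ∈ Sᶜ, Q w x ≤ 1 := by
        rw [hsplit, hzero, zero_add] at hA
        exact hA
      have hle : Q u v ≤ ∑ w ∈ S, ∑ x ∈ Sᶜ, Q w x := by
        calc Q u v ≤ ∑ x ∈ Sᶜ, Q u x :=
              Finset.single_le_sum (fun x hx => hnonneg u huS x hx) hvS
          _ ≤ ∑ w ∈ S, ∑ x ∈ Sᶜ, Q w x :=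
              Finset.single_le_sum
                (fun w hw => Finset.sum_nonneg fun x hx => hnonneg w hw x hx) huS
      linarith
    · push_neg at hpos
      linarith
  intro u v
  rw [abs_le]
  refine ⟨?_, key u v⟩
  have h1 := key v u
  have h2 := hanti u v
  linarith
end

section
/- Under the Physarum dynamics, for any s₀-s₁ cut S the capacity C_S(t) = Σ_{e ∈ δ(S)} D_e(t) satisfies C_S(t) ≥ 1 + (C_S(0) - 1)·e^{-t}, with equality for the cut S = {s₀}. In particular, the capacity of the source cut converges to 1. -/
/-! The capacity obeys the relaxation equation `C' = R - C` with inflow `R ≥ 1`, so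
`(C t - 1) * exp t` has derivative `(R t - 1) * exp t ≥ 0` and is nondecreasing on `[0, ∞)`.
For the source cut `R = 1`, and the same comparison applied to `-C` gives the reverse
inequality. -/

open Finset Filter Real

section Relaxation

variable {C R : ℝ → ℝ} {a : ℝ}

lemma hasDerivAt_sub_mul_exp {t : ℝ} (hC : HasDerivAt C (R t - C t) t) :
    HasDerivAt (fun s => (C s - a) * exp s) ((R t - a) * exp t) t :=
  ((hC.sub_const a).fun_mul (hasDerivAt_exp t)).congr_deriv (by ring)

lemma monotoneOn_sub_mul_exp (hC : ∀ t, 0 ≤ t → HasDerivAt C (R t - C t) t)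
    (hR : ∀ t, 0 ≤ t → a ≤ R t) :
    MonotoneOn (fun s => (C s - a) * exp s) (Set.Ici 0) := by
  have hderiv t (ht : 0 ≤ t) := hasDerivAt_sub_mul_exp (a := a) (hC t ht)
  refine monotoneOn_of_hasDerivWithinAt_nonneg (convex_Ici 0)
    (fun t ht => (hderiv t ht).continuousAt.continuousWithinAt)
    (fun t ht => (hderiv t (interior_subset ht)).hasDerivWithinAt) fun t ht => ?_
  exact mul_nonneg (sub_nonneg.2 (hR t (interior_subset ht))) (exp_pos t).le

lemma le_of_hasDerivAt_relaxation (hC : ∀ t, 0 ≤ t → HasDerivAt C (R t - C t) t)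
    (hR : ∀ t, 0 ≤ t → a ≤ R t) {t : ℝ} (ht : 0 ≤ t) :
    a + (C 0 - a) * exp (-t) ≤ C t := by
  have hmono : (C 0 - a) * exp 0 ≤ (C t - a) * exp t :=
    monotoneOn_sub_mul_exp hC hR Set.self_mem_Ici ht ht
  rw [exp_zero, mul_one, ← div_le_iff₀ (exp_pos t), div_eq_mul_inv, ← exp_neg] at hmono
  linarith

lemma eq_of_hasDerivAt_relaxation (hC : ∀ t, 0 ≤ t → HasDerivAt C (R t - C t) t)
    (hR : ∀ t, 0 ≤ t → R t = a) {t : ℝ} (ht : 0 ≤ t) :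
    C t = a + (C 0 - a) * exp (-t) := by
  have hlower := le_of_hasDerivAt_relaxation hC (fun s hs => (hR s hs).ge) ht
  have hupper := le_of_hasDerivAt_relaxation (C := -C) (R := -R) (a := -a)
    (fun s hs => ((hC s hs).neg).congr_deriv (by simp only [Pi.neg_apply]; ring))
    (fun s hs => by simp [hR s hs]) ht
  simp only [Pi.neg_apply] at hupper
  linarith

lemma tendsto_relaxation (a b : ℝ) :
    Tendsto (fun t => a + b * exp (-t)) atTop (nhds a) := by
  simpa using (tendsto_exp_neg_atTop_nhds_zero.const_mul b).const_add a

end Relaxation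

lemma hasDerivAt_sum_relaxation {E : Type*} {D Q : ℝ → E → ℝ} {t : ℝ}
    (hdyn : ∀ e, HasDerivAt (fun s => D s e) (|Q t e| - D t e) t) (T : Finset E) :
    HasDerivAt (fun s => ∑ e ∈ T, D s e) ((∑ e ∈ T, |Q t e|) - ∑ e ∈ T, D t e) t := by
  rw [← sum_sub_distrib]
  exact HasDerivAt.fun_sum fun e _ => hdyn e

theorem cut_capacity_bound_general {E : Type*}
    (D Q : ℝ → E → ℝ)
    (hdyn : ∀ t e, 0 ≤ t → HasDerivAt (fun s => D s e) (|Q t e| - D t e) t)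
    (S S₀ : Finset E)
    (hcut : ∀ t, 0 ≤ t → 1 ≤ ∑ e ∈ S, |Q t e|)
    (hsrc : ∀ t, 0 ≤ t → ∑ e ∈ S₀, |Q t e| = 1) :
    (∀ t, 0 ≤ t →
      1 + ((∑ e ∈ S, D 0 e) - 1) * Real.exp (-t) ≤ ∑ e ∈ S, D t e) ∧
    (∀ t, 0 ≤ t →
      ∑ e ∈ S₀, D t e = 1 + ((∑ e ∈ S₀, D 0 e) - 1) * Real.exp (-t)) ∧
    Tendsto (fun t => ∑ e ∈ S₀, D t e) atTop (nhds 1) := by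
  have hcap (T : Finset E) t (ht : 0 ≤ t) :=
    hasDerivAt_sum_relaxation (fun e => hdyn t e ht) T
  have hsource t (ht : 0 ≤ t) := eq_of_hasDerivAt_relaxation (hcap S₀) hsrc ht
  refine ⟨fun t ht => le_of_hasDerivAt_relaxation (hcap S) hcut ht, hsource, ?_⟩
  refine (tendsto_relaxation 1 ((∑ e ∈ S₀, D 0 e) - 1)).congr' ?_
  filter_upwards [eventually_ge_atTop 0] with t ht
  exact (hsource t ht).symm

/-- Under the Physarum dynamics `D_e' = |Q_e| - D_e`, for any `s₀`-`s₁` cut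
(with edge set `S`, across which the unit current satisfies
`Σ_{e∈S} |Q_e| ≥ 1`), the capacity `C_S(t) = Σ_{e∈S} D_e(t)` satisfies
`C_S(t) ≥ 1 + (C_S(0)-1)·e^{-t}`; for the source cut `S₀` (across which
`Σ_{e∈S₀} |Q_e| = 1` exactly) equality holds, so the capacity of the source
cut converges to `1`. -/
theorem cut_capacity_bound {E : Type*} [Fintype E] [DecidableEq E]
    (D Q : ℝ → E → ℝ)
    (hdyn : ∀ t e, 0 ≤ t → HasDerivAt (fun s => D s e) (|Q t e| - D t e) t)
    (S S₀ : Finset E)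
    (hcut : ∀ t, 0 ≤ t → 1 ≤ ∑ e ∈ S, |Q t e|)
    (hsrc : ∀ t, 0 ≤ t → ∑ e ∈ S₀, |Q t e| = 1) :
    (∀ t, 0 ≤ t →
      1 + ((∑ e ∈ S, D 0 e) - 1) * Real.exp (-t) ≤ ∑ e ∈ S, D t e) ∧
    (∀ t, 0 ≤ t →
      ∑ e ∈ S₀, D t e = 1 + ((∑ e ∈ S₀, D 0 e) - 1) * Real.exp (-t)) ∧
    Tendsto (fun t => ∑ e ∈ S₀, D t e) atTop (nhds 1) :=
  cut_capacity_bound_general D Q hdyn S S₀ hcut hsrc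
end

section
/- At an equilibrium of the Physarum dynamics (D_e = |Q_e| for all e), the minimum capacity of an s₀-s₁ cut equals the capacity of the cut {s₀}, and both equal 1. -/
/-!
Kirchhoff's law makes the net current across any `s₀`-`s₁` cut equal to the total divergence
inside it, which is `1`; since `D = |Q|`, every cut has capacity at least `1`. For the cut `{s₀}`
the bound is attained because all current leaves `s₀`: the set of vertices of potential above
`p s₀` contains no source, so no current can leave it, whereas a neighbour of `s₀` in it would
push current into `s₀`. Hence `s₀` has the highest potential in its neighbourhood.
-/

open Finset

section AntisymmetricFlow

variable {V : Type*} {f : V → V → ℝ}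

theorem sum_sum_eq_zero_of_antisymm (hf : ∀ u v, f v u = -f u v) (S : Finset V) :
    ∑ u ∈ S, ∑ v ∈ S, f u v = 0 := by
  have h : ∑ u ∈ S, ∑ v ∈ S, f u v = ∑ u ∈ S, ∑ v ∈ S, -f u v := by
    rw [sum_comm]
    exact sum_congr rfl fun u _ => sum_congr rfl fun v _ => hf u v
  simp only [sum_neg_distrib] at h
  linarith

theorem sum_sum_compl_eq_sum_sum_of_antisymm [Fintype V] [DecidableEq V]
    (hf : ∀ u v, f v u = -f u v) (S : Finset V) :
    ∑ u ∈ S, ∑ v ∈ Sᶜ, f u v = ∑ u ∈ S, ∑ v, f u v := by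
  simp only [← sum_add_sum_compl S (f _), sum_add_distrib,
    sum_sum_eq_zero_of_antisymm hf, zero_add]

end AntisymmetricFlow

section PotentialFlow

variable {V : Type*} {Adj : V → V → Prop} [DecidableRel Adj] {R : V → V → ℝ}
  {p : V → ℝ}

noncomputable def potentialFlow (Adj : V → V → Prop) [DecidableRel Adj] (R : V → V → ℝ)
    (p : V → ℝ) (u v : V) : ℝ :=
  if Adj u v then (p u - p v) / R u v else 0

theorem potentialFlow_swap (hsymm : ∀ u v, Adj u v → Adj v u) (hRsymm : ∀ u v, R u v = R v u)
    (u v : V) : potentialFlow Adj R p v u = -potentialFlow Adj R p u v := by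
  by_cases h : Adj u v
  · simp only [potentialFlow, h, hsymm u v h, if_true, hRsymm v u]
    ring
  · have h' : ¬ Adj v u := fun h' => h (hsymm v u h')
    simp only [potentialFlow, h, h', if_false, neg_zero]

theorem potentialFlow_self (u : V) : potentialFlow Adj R p u u = 0 := by
  simp [potentialFlow]

theorem potentialFlow_nonneg (hR : ∀ u v, Adj u v → 0 < R u v) {u v : V} (h : p v ≤ p u) :
    0 ≤ potentialFlow Adj R p u v := by
  unfold potentialFlow
  split_ifs with hadj
  · exact div_nonneg (sub_nonneg.mpr h) (hR u v hadj).le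
  · exact le_rfl

theorem potentialFlow_pos (hR : ∀ u v, Adj u v → 0 < R u v) {u v : V} (hadj : Adj u v)
    (h : p v < p u) : 0 < potentialFlow Adj R p u v := by
  rw [potentialFlow, if_pos hadj]
  exact div_pos (sub_pos.mpr h) (hR u v hadj)

theorem potential_le_of_adj_of_no_source [Fintype V] [DecidableEq V]
    (hsymm : ∀ u v, Adj u v → Adj v u) (hR : ∀ u v, Adj u v → 0 < R u v)
    (hRsymm : ∀ u v, R u v = R v u) {s : V}
    (hnosource : ∀ u, p s < p u → ∑ w, potentialFlow Adj R p u w ≤ 0) {v : V}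
    (hadj : Adj s v) : p v ≤ p s := by
  by_contra! hv
  set S := univ.filter (fun w => p s < p w)
  have hvS : v ∈ S := by simpa [S] using hv
  have hsS : s ∈ Sᶜ := by simp [S]
  have hcross : ∀ u ∈ S, ∀ w ∈ Sᶜ, 0 ≤ potentialFlow Adj R p u w := by
    intro u hu w hw
    simp only [S, mem_compl, mem_filter, mem_univ, true_and, not_lt] at hu hw
    exact potentialFlow_nonneg hR (hw.trans hu.le)
  have hout_nonpos : ∑ u ∈ S, ∑ w ∈ Sᶜ, potentialFlow Adj R p u w ≤ 0 := by
    rw [sum_sum_compl_eq_sum_sum_of_antisymm (potentialFlow_swap hsymm hRsymm)]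
    exact sum_nonpos fun u hu => hnosource u (mem_filter.mp hu).2
  have hout_pos : 0 < ∑ u ∈ S, ∑ w ∈ Sᶜ, potentialFlow Adj R p u w :=
    calc 0 < potentialFlow Adj R p v s := potentialFlow_pos hR (hsymm s v hadj) hv
      _ ≤ ∑ w ∈ Sᶜ, potentialFlow Adj R p v w := single_le_sum (hcross v hvS) hsS
      _ ≤ _ := single_le_sum (fun u hu => sum_nonneg (hcross u hu)) hvS
  linarith

end PotentialFlow

theorem sum_ite_source_sink {V : Type*} [DecidableEq V] {s₀ s₁ : V} {S : Finset V}
    (h₀ : s₀ ∈ S) (h₁ : s₁ ∉ S) :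
    ∑ u ∈ S, (if u = s₀ then (1 : ℝ) else if u = s₁ then -1 else 0) = 1 := by
  rw [sum_congr rfl fun u hu => by rw [if_neg (ne_of_mem_of_not_mem hu h₁)],
    sum_ite_eq' S s₀, if_pos h₀]

theorem equilibrium_mincut_general {V : Type*} [Fintype V] [DecidableEq V]
    (Adj : V → V → Prop) [DecidableRel Adj]
    (hsymm : ∀ u v, Adj u v → Adj v u)
    (R : V → V → ℝ) (hR : ∀ u v, Adj u v → 0 < R u v)
    (hRsymm : ∀ u v, R u v = R v u)
    (s₀ s₁ : V)
    (p : V → ℝ) (Q : V → V → ℝ)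
    (hQ : ∀ u v, Q u v = if Adj u v then (p u - p v) / R u v else 0)
    (hkirchhoff : ∀ v, ∑ u, Q v u =
      if v = s₀ then 1 else if v = s₁ then -1 else 0)
    (D : V → V → ℝ)
    (hEq : ∀ u v, D u v = |Q u v|) :
    (∑ v ∈ univ.filter (fun v => v ≠ s₀), D s₀ v = 1) ∧
    (∀ S : Finset V, s₀ ∈ S → s₁ ∉ S →
      1 ≤ ∑ u ∈ S, ∑ v ∈ Sᶜ, D u v) := by
  obtain rfl : Q = potentialFlow Adj R p := funext₂ hQ
  clear hQ
  have hout : ∀ v, 0 ≤ potentialFlow Adj R p s₀ v := fun v => by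
    by_cases hadj : Adj s₀ v
    · refine potentialFlow_nonneg hR
        (potential_le_of_adj_of_no_source hsymm hR hRsymm (fun u hu => ?_) hadj)
      rw [hkirchhoff u, if_neg (by rintro rfl; exact hu.false)]
      split_ifs <;> norm_num
    · simp [potentialFlow, hadj]
  refine ⟨?_, fun S h₀ h₁ => ?_⟩
  · rw [sum_filter_of_ne fun v _ h => ?_]
    · simp only [hEq, abs_of_nonneg (hout _), hkirchhoff, if_true]
    · rintro rfl
      exact h (by rw [hEq, potentialFlow_self, abs_zero])
  · calc (1 : ℝ) = ∑ u ∈ S, ∑ v ∈ Sᶜ, potentialFlow Adj R p u v := by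
          rw [sum_sum_compl_eq_sum_sum_of_antisymm (potentialFlow_swap hsymm hRsymm),
            sum_congr rfl fun u _ => hkirchhoff u, sum_ite_source_sink h₀ h₁]
      _ ≤ ∑ u ∈ S, ∑ v ∈ Sᶜ, D u v :=
          sum_le_sum fun u _ => sum_le_sum fun v _ => (hEq u v).symm ▸ le_abs_self _

/-- At an equilibrium of the Physarum dynamics (`D_e = |Q_e|` for every edge),
the minimum capacity of an `s₀`-`s₁` cut equals the capacity of the cut
`{s₀}`, and both equal `1`.  Here `Q` is the unit-value electrical
`s₀`-`s₁` flow induced by the potentials `p`, and the capacity of a cut `S`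
(with `s₀ ∈ S`, `s₁ ∉ S`) is `Σ_{u∈S, v∉S} D u v`. -/
theorem equilibrium_mincut {V : Type*} [Fintype V] [DecidableEq V]
    (Adj : V → V → Prop) [DecidableRel Adj]
    (hsymm : ∀ u v, Adj u v → Adj v u) (hirrefl : ∀ v, ¬ Adj v v)
    (R : V → V → ℝ) (hR : ∀ u v, Adj u v → 0 < R u v)
    (hRsymm : ∀ u v, R u v = R v u)
    (s₀ s₁ : V) (hne : s₀ ≠ s₁)
    (p : V → ℝ) (Q : V → V → ℝ)
    (hQ : ∀ u v, Q u v = if Adj u v then (p u - p v) / R u v else 0)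
    (hkirchhoff : ∀ v, ∑ u, Q v u =
      if v = s₀ then 1 else if v = s₁ then -1 else 0)
    (D : V → V → ℝ)
    (hEq : ∀ u v, D u v = |Q u v|) :
    (∑ v ∈ univ.filter (fun v => v ≠ s₀), D s₀ v = 1) ∧
    (∀ S : Finset V, s₀ ∈ S → s₁ ∉ S →
      1 ≤ ∑ u ∈ S, ∑ v ∈ Sᶜ, D u v) :=
  equilibrium_mincut_general Adj hsymm R hR hRsymm s₀ s₁ p Q hQ hkirchhoff D hEq
end

section
/- Let R_e > 0, let Q be the minimum-energy unit s₀-s₁ flow with respect to R (the electrical flow), let D_e > 0 be edge capacities, let C be the minimum s₀-s₁ cut capacity with respect to D, and let F be a maximum flow with |F_e| ≤ D_e of value C. Then (1/C)·Σ_e R_e |Q_e| D_e ≤ (1/C²)·Σ_e R_e D_e², i.e., the quantity h = -(1/C)Σ_e R_e|Q_e|D_e + (1/C²)Σ_e R_e D_e² is nonnegative. Equality holds iff |Q_e| = D_e/C for all e. -/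
open Finset

/-- Nonnegativity of `h`: if `Q` is the minimum-energy unit flow (Thomson's
principle, instantiated with the feasible unit flow `F/C`, where `F` is a
maximum flow of value `C` satisfying the capacities `|F_e| ≤ D_e`), then
`(1/C)·Σ_e R_e |Q_e| D_e ≤ (1/C²)·Σ_e R_e D_e²`, with equality iff
`|Q_e| = D_e/C` for all `e`. -/
theorem h_nonneg {E : Type*} [Fintype E]
    (R D Q F : E → ℝ) (C : ℝ)
    (hR : ∀ e, 0 < R e) (hD : ∀ e, 0 < D e) (hC : 0 < C)
    (hF : ∀ e, |F e| ≤ D e)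
    (hThomson : ∑ e, R e * Q e ^ 2 ≤ ∑ e, R e * (F e / C) ^ 2) :
    (1 / C) * ∑ e, R e * |Q e| * D e ≤ (1 / C ^ 2) * ∑ e, R e * D e ^ 2 ∧
    ((1 / C) * ∑ e, R e * |Q e| * D e = (1 / C ^ 2) * ∑ e, R e * D e ^ 2 ↔
      ∀ e, |Q e| = D e / C) := by
  have hB : (1 / C ^ 2) * ∑ e, R e * D e ^ 2 = ∑ e, R e * (D e / C) ^ 2 := by
    rw [Finset.mul_sum]
    refine Finset.sum_congr rfl fun e _ => ?_
    field_simp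
  have hS : (1 / C) * ∑ e, R e * |Q e| * D e = ∑ e, R e * |Q e| * (D e / C) := by
    rw [Finset.mul_sum]
    refine Finset.sum_congr rfl fun e _ => ?_
    field_simp
  have hAB : ∑ e, R e * Q e ^ 2 ≤ ∑ e, R e * (D e / C) ^ 2 := by
    refine hThomson.trans (Finset.sum_le_sum fun e _ => ?_)
    have h1 := hF e
    have h2 := abs_nonneg (F e)
    have h3 : (F e) ^ 2 ≤ (D e) ^ 2 := by
      have := sq_abs (F e)
      nlinarith
    have : (F e / C) ^ 2 ≤ (D e / C) ^ 2 := by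
      rw [div_pow, div_pow]
      exact div_le_div_of_nonneg_right h3 (by positivity) |>.trans_eq rfl
    exact mul_le_mul_of_nonneg_left this (hR e).le
  have hexp : ∑ e, R e * (|Q e| - D e / C) ^ 2
      = (∑ e, R e * Q e ^ 2) - 2 * (∑ e, R e * |Q e| * (D e / C))
        + ∑ e, R e * (D e / C) ^ 2 := by
    have step : ∀ e : E, R e * (|Q e| - D e / C) ^ 2
        = R e * Q e ^ 2 - 2 * (R e * |Q e| * (D e / C)) + R e * (D e / C) ^ 2 := by
      intro e
      have h := sq_abs (Q e)
      linear_combination R e * h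
    simp only [step, Finset.sum_add_distrib, Finset.sum_sub_distrib, ← Finset.mul_sum]
  have hnn : 0 ≤ ∑ e, R e * (|Q e| - D e / C) ^ 2 :=
    Finset.sum_nonneg fun e _ => mul_nonneg (hR e).le (sq_nonneg _)
  constructor
  · rw [hS, hB]
    linarith [hexp ▸ hnn]
  · rw [hS, hB]
    constructor
    · intro heq
      have hA : ∑ e, R e * Q e ^ 2 = ∑ e, R e * (D e / C) ^ 2 := by
        linarith [hexp ▸ hnn]
      have hzero : ∑ e, R e * (|Q e| - D e / C) ^ 2 = 0 := by
        rw [hexp]; linarith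
      have := (Finset.sum_eq_zero_iff_of_nonneg
        (fun e _ => mul_nonneg (hR e).le (sq_nonneg (|Q e| - D e / C)))).mp hzero
      intro e
      have he := this e (Finset.mem_univ e)
      have h4 : (|Q e| - D e / C) ^ 2 = 0 := by
        rcases mul_eq_zero.mp he with h | h
        · exact absurd h (hR e).ne'
        · exact h
      have := pow_eq_zero_iff (n := 2) (by norm_num) |>.mp h4
      linarith
    · intro h
      refine Finset.sum_congr rfl fun e _ => ?_
      rw [h e]; ring
end

section
/- For a path P in the Physarum network, the function W(P) = Σ_{e∈P} L_e ln D_e satisfies W(P)' = Δ(P) - L(P) + 2·Σ_{e∈P, Δ(e)<0} |Δ(e)|, where Δ(P) is the potential drop from the start to the end of P (edges oriented along P), Δ(e) is the potential drop on edge e, and L(P) = Σ_{e∈P} L_e. Consequently, if Δ(P)(t) ≥ Δ₀ for all sufficiently large t, then W(P)(t) ≥ C + (Δ₀ - L(P))·t for some constant C and all t. -/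
open Real Finset

/-! Since `Q_e = D_e Δ_e / L_e`, the dynamics give `(L_e ln D_e)' = |Δ_e| - L_e`, and
`|x| = x + 2|x|·[x < 0]` turns the sum of these into the stated formula for `W(P)'`.
Once `Δ(P) ≥ Δ₀`, the extra term being nonnegative, `W(P)(t) - (Δ₀ - L(P)) t` is nondecreasing;
on the compact interval before that it is continuous, hence bounded below. -/

theorem Finset.sum_abs_eq_sum_add_two_mul_sum_abs_filter_neg {ι : Type*} (s : Finset ι)
    (f : ι → ℝ) :
    ∑ i ∈ s, |f i| = ∑ i ∈ s, f i + 2 * ∑ i ∈ s with f i < 0, |f i| := by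
  rw [sum_filter, mul_sum, ← sum_add_distrib]
  refine sum_congr rfl fun i _ => ?_
  split_ifs with h
  · rw [abs_of_neg h]; ring
  · rw [abs_of_nonneg (not_lt.mp h)]; ring

theorem hasDerivAt_const_mul_log_of_hasDerivAt_abs_flow_sub {D : ℝ → ℝ} {t l a : ℝ}
    (hl : 0 < l) (hD : 0 < D t) (hdyn : HasDerivAt D (|D t * a / l| - D t) t) :
    HasDerivAt (fun s => l * log (D s)) (|a| - l) t := by
  refine ((hdyn.log hD.ne').const_mul l).congr_deriv ?_
  rw [abs_div, abs_mul, abs_of_pos hD, abs_of_pos hl]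
  field_simp

theorem bddBelow_image_Ici_of_monotoneOn_Ici {f : ℝ → ℝ} {a : ℝ} (b : ℝ) (hf : Continuous f)
    (hmono : MonotoneOn f (Set.Ici a)) : BddBelow (f '' Set.Ici b) := by
  have hb : b ≤ max a b := le_max_right a b
  rw [← Set.Icc_union_Ici_eq_Ici hb, Set.image_union]
  refine (isCompact_Icc.bddBelow_image hf.continuousOn).union ⟨f (max a b), ?_⟩
  rintro _ ⟨t, ht, rfl⟩
  exact hmono (Set.mem_Ici.mpr (le_max_left a b)) (Set.mem_Ici.mpr ((le_max_left a b).trans ht)) ht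

theorem exists_add_mul_le_of_hasDerivAt_of_le {g g' : ℝ → ℝ} {m a : ℝ} (b : ℝ)
    (hg : ∀ t, HasDerivAt g (g' t) t) (hm : ∀ t, a ≤ t → m ≤ g' t) :
    ∃ c, ∀ t, b ≤ t → c + m * t ≤ g t := by
  set h : ℝ → ℝ := fun t => g t - m * t
  have hh : ∀ t, HasDerivAt h (g' t - m) t := fun t =>
    (hg t).sub (by simpa using (hasDerivAt_id t).const_mul m)
  have hcont : Continuous h := continuous_iff_continuousAt.mpr fun t => (hh t).continuousAt
  have hmono : MonotoneOn h (Set.Ici a) := by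
    refine monotoneOn_of_hasDerivWithinAt_nonneg (convex_Ici a) hcont.continuousOn
      (fun t _ => (hh t).hasDerivWithinAt) fun t ht => ?_
    rw [interior_Ici] at ht
    exact sub_nonneg.mpr (hm t (le_of_lt ht))
  obtain ⟨c, hc⟩ := bddBelow_image_Ici_of_monotoneOn_Ici b hcont hmono
  exact ⟨c, fun t ht => by linarith [hc ⟨t, ht, rfl⟩]⟩

/-- For a path `P` (with edges indexed by a finite type, edge `e` of length
`L e`, potential drop `Δ e` and flow `Q_e = D_e·Δ_e/L_e`), the function
`W(P) = Σ_{e∈P} L_e·ln D_e` satisfies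
`W(P)' = Δ(P) - L(P) + 2·Σ_{Δ(e)<0} |Δ(e)|` where `Δ(P) = Σ_e Δ(e)` and
`L(P) = Σ_e L_e`.  Consequently, if `Δ(P)(t) ≥ Δ₀` for all `t ≥ t₀`, then
`W(P)(t) ≥ C + (Δ₀ - L(P))·t` for some constant `C` and all `t ≥ 0`. -/
theorem path_log_weight_derivative {E : Type*} [Fintype E]
    (L : E → ℝ) (hL : ∀ e, 0 < L e)
    (D : ℝ → E → ℝ) (Δ : ℝ → E → ℝ)
    (hpos : ∀ t e, 0 < D t e)
    (hdyn : ∀ t e, HasDerivAt (fun s => D s e)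
      (|D t e * Δ t e / L e| - D t e) t) :
    (∀ t, HasDerivAt (fun s => ∑ e, L e * log (D s e))
      ((∑ e, Δ t e) - (∑ e, L e) +
        2 * ∑ e ∈ univ.filter (fun e => Δ t e < 0), |Δ t e|) t) ∧
    ∀ Δ₀ t₀ : ℝ, (∀ t, t₀ ≤ t → Δ₀ ≤ ∑ e, Δ t e) →
      ∃ c : ℝ, ∀ t, 0 ≤ t →
        c + (Δ₀ - ∑ e, L e) * t ≤ ∑ e, L e * log (D t e) := by
  have hW : ∀ t, HasDerivAt (fun s => ∑ e, L e * log (D s e))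
      ((∑ e, Δ t e) - (∑ e, L e) +
        2 * ∑ e ∈ univ.filter (fun e => Δ t e < 0), |Δ t e|) t := by
    intro t
    have hsum := HasDerivAt.fun_sum (u := univ) fun e _ =>
      hasDerivAt_const_mul_log_of_hasDerivAt_abs_flow_sub (hL e) (hpos t e) (hdyn t e)
    rwa [sum_sub_distrib, sum_abs_eq_sum_add_two_mul_sum_abs_filter_neg, add_sub_right_comm]
      at hsum
  refine ⟨hW, fun Δ₀ t₀ hΔ => exists_add_mul_le_of_hasDerivAt_of_le (a := t₀) 0 hW
    fun t (ht : t₀ ≤ t) => ?_⟩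
  have hneg : 0 ≤ ∑ e ∈ univ.filter (fun e => Δ t e < 0), |Δ t e| :=
    sum_nonneg fun e _ => abs_nonneg _
  linarith [hΔ t ht]
end

section
/- In the path decomposition P₀, P₁, …, P_k of the network with slopes f(P₀) = 1 and f(Pᵢ) defined as the maximum of (p*_a - p*_b)/L(P) over admissible attachment paths, there exists an index i₀ ≤ k such that f(P₀) > f(P₁) > … > f(P_{i₀}) > 0 = f(P_{i₀+1}) = … = f(P_k). -/
/-!
Suppose `f(Pᵢ₊₁) > 0` but `f(Pᵢ₊₁) ≥ f(Pᵢ)`. Each endpoint of `Q = Pᵢ₊₁` lies on an earlier path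
or on `C = Pᵢ`; in the latter case prolong `Q` along `C` up to the head of `C` (at the upper
endpoint `a`) or down to the end of `C` (at the lower endpoint `b`). Since `p*` is linear along `C`
with slope `f(C)`, the spliced path has as slope a mediant of `f(Q)` and `f(C)`, hence at least
`f(C)`; it is simple because the pieces of `C` it uses lie above `p*(a)`, resp. below
`p*(b) < p*(a)`. For `i = 0` it is an `s₀`-`s₁` path, for `i > 0` an admissible path at stage `i`,
so the choice of `C` (shortest, resp. of maximal slope) and its uniqueness force it to be `C`; but
then `Q` shares an edge with `C`. So positive slopes strictly decrease, and as all slopes are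
nonnegative they are positive up to some `i₀` and vanish afterwards.
-/

open Finset

variable {V : Type*} [Fintype V] [DecidableEq V] [Inhabited V]

/-- Length of a list of vertices w.r.t. edge lengths `L` (sum over
consecutive pairs). -/
def listLen (L : V → V → ℝ) (l : List V) : ℝ :=
  ((l.zip l.tail).map (fun q => L q.1 q.2)).sum

/-- `l` is a (simple) path in `G` with at least one edge. -/
def IsPathList (G : SimpleGraph V) (l : List V) : Prop :=
  l.Chain' G.Adj ∧ l.Nodup ∧ 2 ≤ l.length

/-- The (undirected) edge `{u,v}` occurs on the list `l`. -/
def edgeIn (l : List V) (u v : V) : Prop :=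
  (u, v) ∈ l.zip l.tail ∨ (v, u) ∈ l.zip l.tail

/-- The pathSlope of a path: potential difference of the endpoints divided by the
length. -/
noncomputable def pathSlope (L : V → V → ℝ) (pstar : V → ℝ) (l : List V) : ℝ :=
  (pstar l.headI - pstar l.getLastI) / listLen L l

/-- A vertex lies on one of the paths `P j` with `j < i`. -/
def onEarlier {k : ℕ} (P : Fin (k + 1) → List V) (i : Fin (k + 1))
    (v : V) : Prop :=
  ∃ j, j < i ∧ v ∈ P j

/-- `l` is an admissible attachment path at stage `i`: a path of `G` whose
endpoints lie on earlier paths (with nonincreasing `p*`), with no interior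
vertex on earlier paths and no edge on earlier paths. -/
def Admissible {k : ℕ} (G : SimpleGraph V) (pstar : V → ℝ)
    (P : Fin (k + 1) → List V) (i : Fin (k + 1)) (l : List V) : Prop :=
  IsPathList G l ∧
  onEarlier P i l.headI ∧ onEarlier P i l.getLastI ∧
  pstar l.getLastI ≤ pstar l.headI ∧
  (∀ v ∈ l.tail.dropLast, ¬ onEarlier P i v) ∧
  (∀ u v, edgeIn l u v → ∀ j, j < i → ¬ edgeIn (P j) u v)

namespace List

variable {α : Type*}

@[simp]
lemma consecutivePairs_singleton (a : α) : [a].consecutivePairs = [] := rfl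

@[simp]
lemma consecutivePairs_cons_cons (a b : α) (l : List α) :
    (a :: b :: l).consecutivePairs = (a, b) :: (b :: l).consecutivePairs := rfl

lemma consecutivePairs_drop (l : List α) (n : ℕ) :
    (l.drop n).consecutivePairs = l.consecutivePairs.drop n := by
  simp only [consecutivePairs, tail_drop, zip, drop_zipWith, drop_tail]

lemma consecutivePairs_take_succ : ∀ (l : List α) (n : ℕ),
    (l.take (n + 1)).consecutivePairs = l.consecutivePairs.take n
  | [], _ | [_], _ | _ :: _ :: _, 0 => by simp
  | a :: b :: l, n + 1 => by
    simpa [take_succ_cons] using consecutivePairs_take_succ (b :: l) n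

lemma consecutivePairs_ne_nil : ∀ {l : List α}, 2 ≤ l.length → l.consecutivePairs ≠ []
  | _ :: _ :: _, _ => by simp

lemma isChain_iff_forall_mem_consecutivePairs {R : α → α → Prop} :
    ∀ {l : List α}, l.IsChain R ↔ ∀ p ∈ l.consecutivePairs, R p.1 p.2
  | [] | [_] => by simp
  | a :: b :: l => by
    simp [isChain_cons_cons, isChain_iff_forall_mem_consecutivePairs (l := b :: l)]

lemma getElem_mem_tail_dropLast {l : List α} {m : ℕ} (h₁ : 1 ≤ m)
    (h₂ : m + 2 ≤ l.length) : l[m] ∈ l.tail.dropLast := by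
  have hm : m - 1 < l.tail.dropLast.length := by
    simp only [length_dropLast, length_tail]; omega
  convert getElem_mem hm using 1
  simp only [getElem_dropLast, getElem_tail]
  congr 1
  omega

variable [Inhabited α]

lemma getLastI_eq_getLast {l : List α} (h : l ≠ []) : l.getLastI = l.getLast h := by
  simp [getLastI_eq_getLast?_getD, getLast?_eq_some_getLast h]

lemma getLastI_append {l₁ l₂ : List α} (h : l₂ ≠ []) :
    (l₁ ++ l₂).getLastI = l₂.getLastI := by
  rw [getLastI_eq_getLast (append_ne_nil_of_right_ne_nil l₁ h), getLastI_eq_getLast h,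
    getLast_append_right h]

lemma getLastI_cons {a : α} {l : List α} (h : l ≠ []) : (a :: l).getLastI = l.getLastI :=
  getLastI_append (l₁ := [a]) h

lemma headI_append {l₁ l₂ : List α} (h : l₁ ≠ []) : (l₁ ++ l₂).headI = l₁.headI := by
  cases l₁ <;> simp_all

lemma getLastI_append_tail {l₁ l₂ : List α} (h : l₁.getLastI = l₂.headI) :
    (l₁ ++ l₂.tail).getLastI = l₂.getLastI := by
  rcases l₂ with _ | ⟨b, _ | ⟨c, l₂⟩⟩
  · simpa [getLastI] using h
  · simpa [getLastI] using h
  · rw [tail_cons, getLastI_append (cons_ne_nil c l₂), getLastI_cons (cons_ne_nil c l₂)]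

lemma consecutivePairs_append_tail :
    ∀ {l₁ l₂ : List α}, l₁ ≠ [] → l₁.getLastI = l₂.headI →
      (l₁ ++ l₂.tail).consecutivePairs = l₁.consecutivePairs ++ l₂.consecutivePairs
  | [_], [], _, _ => by simp
  | [_], _ :: _, _, h => by simp_all [getLastI]
  | a :: b :: l₁, l₂, _, h => by
    rw [getLastI_cons (cons_ne_nil b l₁)] at h
    simpa using consecutivePairs_append_tail (cons_ne_nil b l₁) h

lemma tail_append_tail {l₁ l₂ : List α} (h₁ : l₁.tail ≠ []) (h₂ : l₂ ≠ [])
    (h : l₁.getLastI = l₂.headI) : l₁.tail ++ l₂.tail = l₁.tail.dropLast ++ l₂ := by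
  obtain ⟨b, l₂, rfl⟩ := exists_cons_of_ne_nil h₂
  rcases l₁ with _ | ⟨a, l₁⟩
  · simp at h₁
  · rw [tail_cons] at h₁ ⊢
    rw [headI_cons, getLastI_cons h₁, getLastI_eq_getLast h₁] at h
    conv_lhs => rw [← dropLast_concat_getLast h₁, h]
    simp

lemma headI_drop {l : List α} {n : ℕ} (h : n < l.length) : (l.drop n).headI = l[n] := by
  rw [drop_eq_getElem_cons h, headI_cons]

lemma getLastI_drop {l : List α} {n : ℕ} (h : n < l.length) :
    (l.drop n).getLastI = l.getLastI := by
  have hl : l ≠ [] := ne_nil_of_length_pos (by omega)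
  rw [getLastI_eq_getLast (by simpa using h), getLastI_eq_getLast hl, getLast_drop]

lemma headI_take_succ {l : List α} {n : ℕ} : (l.take (n + 1)).headI = l.headI := by
  cases l <;> simp

lemma getLastI_take_succ {l : List α} {n : ℕ} (h : n < l.length) :
    (l.take (n + 1)).getLastI = l[n] := by
  rw [take_add_one, getElem?_eq_getElem h, Option.toList_some, getLastI_append (cons_ne_nil _ _)]
  rfl

lemma mem_dropLast_or_eq_getLastI {l : List α} {v : α} (hv : v ∈ l) :
    v ∈ l.dropLast ∨ v = l.getLastI := by
  have hl : l ≠ [] := ne_nil_of_mem hv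
  rw [← dropLast_concat_getLast hl, mem_append, mem_singleton] at hv
  rwa [getLastI_eq_getLast hl]

lemma mem_tail_dropLast_or_eq_getLastI {l : List α} {v : α} (hv : v ∈ l.tail) :
    v ∈ l.tail.dropLast ∨ v = l.getLastI := by
  rcases l with _ | ⟨a, l⟩
  · simp at hv
  · rw [tail_cons] at hv ⊢
    rw [getLastI_cons (ne_nil_of_mem hv)]
    exact mem_dropLast_or_eq_getLastI hv

lemma headI_not_mem_tail {l : List α} (h : l.Nodup) (hl : l ≠ []) : l.headI ∉ l.tail := by
  obtain ⟨a, l, rfl⟩ := exists_cons_of_ne_nil hl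
  exact (nodup_cons.1 h).1

end List

theorem Fin.exists_pos_strictAnti_then_zero {α : Type*} [LinearOrder α] [Zero α] {n : ℕ}
    {g : Fin (n + 1) → α} (h₀ : 0 < g 0) (hnonneg : ∀ i, 0 ≤ g i)
    (hstep : ∀ i : Fin n, 0 < g i.succ → g i.succ < g i.castSucc) :
    ∃ i₀, (∀ i ≤ i₀, 0 < g i) ∧ (∀ i, i₀ < i → g i = 0) ∧
      ∀ i j, i < j → j ≤ i₀ → g j < g i := by
  have hanti : Antitone g := Fin.antitone_iff_succ_le.2 fun i =>
    (lt_or_ge 0 (g i.succ)).elim (fun h => (hstep i h).le) fun h => h.trans (hnonneg _)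
  let S := Finset.univ.filter fun i => 0 < g i
  have hS : S.Nonempty := ⟨0, by simp [S, h₀]⟩
  have hi₀ : 0 < g (S.max' hS) := (Finset.mem_filter.1 (S.max'_mem hS)).2
  refine ⟨S.max' hS, fun i hi => hi₀.trans_le (hanti hi), fun i hi => ?_,
    fun i j hij hj => ?_⟩
  · refine le_antisymm (not_lt.1 fun h => ?_) (hnonneg i)
    exact (S.le_max' i (by simp [S, h])).not_gt hi
  · obtain ⟨m, rfl⟩ := Fin.exists_castSucc_eq.2 (Fin.ne_last_of_lt hij)
    have hmj : m.succ ≤ j := Fin.castSucc_lt_iff_succ_le.1 hij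
    have hj₀ : 0 < g j := hi₀.trans_le (hanti hj)
    calc g j ≤ g m.succ := hanti hmj
      _ < g m.castSucc := hstep m (hj₀.trans_le (hanti hmj))

section PathDecomposition

variable {V : Type*} {k : ℕ} {P : Fin (k + 1) → List V}

lemma listLen_eq_sum (L : V → V → ℝ) (l : List V) :
    listLen L l = (l.consecutivePairs.map fun q => L q.1 q.2).sum := rfl

lemma listLen_eq_take_add_drop (L : V → V → ℝ) (l : List V) (n : ℕ) :
    listLen L l = listLen L (l.take (n + 1)) + listLen L (l.drop n) := by
  simp only [listLen_eq_sum, List.consecutivePairs_take_succ, List.consecutivePairs_drop,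
    ← List.sum_append, ← List.map_append, List.take_append_drop]

lemma listLen_nonneg {L : V → V → ℝ} {l : List V}
    (h : ∀ p ∈ l.consecutivePairs, 0 ≤ L p.1 p.2) : 0 ≤ listLen L l :=
  List.sum_nonneg fun _ hx => by
    obtain ⟨p, hp, rfl⟩ := List.mem_map.1 hx
    exact h p hp

lemma listLen_pos {G : SimpleGraph V} {L : V → V → ℝ} (hL : ∀ u v, G.Adj u v → 0 < L u v)
    {l : List V} (hl : IsPathList G l) : 0 < listLen L l := by
  refine List.sum_pos _ ?_ (by simpa using List.consecutivePairs_ne_nil hl.2.2)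
  simp only [List.mem_map]
  rintro _ ⟨p, hp, rfl⟩
  exact hL _ _ (List.isChain_iff_forall_mem_consecutivePairs.1 hl.1 p hp)

lemma not_onEarlier_zero {v : V} : ¬ onEarlier P 0 v := fun ⟨j, hj, _⟩ => Fin.not_lt_zero j hj

lemma onEarlier_succ_iff {i : Fin k} {v : V} :
    onEarlier P i.succ v ↔ onEarlier P i.castSucc v ∨ v ∈ P i.castSucc := by
  simp only [onEarlier, ← Fin.le_castSucc_iff, le_iff_lt_or_eq]
  constructor
  · rintro ⟨j, hj | rfl, hv⟩
    exacts [Or.inl ⟨j, hj, hv⟩, Or.inr hv]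
  · rintro (⟨j, hj, hv⟩ | hv)
    exacts [⟨j, Or.inl hj, hv⟩, ⟨_, Or.inr rfl, hv⟩]

variable [Inhabited V]

lemma pstar_sub_eq_pathSlope_mul {L : V → V → ℝ} {pstar : V → ℝ} {l : List V}
    (hl : listLen L l ≠ 0) :
    pstar l.headI - pstar l.getLastI = pathSlope L pstar l * listLen L l :=
  (div_mul_cancel₀ _ hl).symm

def HasLinearPotential (L : V → V → ℝ) (pstar : V → ℝ) (f : ℝ) (C : List V) : Prop :=
  ∀ j < C.length, pstar (C.drop j).headI = pstar C.getLastI + f * listLen L (C.drop j)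

namespace HasLinearPotential

variable {L : V → V → ℝ} {pstar : V → ℝ} {f : ℝ} {C : List V}

lemma pstar_getElem (h : HasLinearPotential L pstar f C) {j : ℕ} (hj : j < C.length) :
    pstar C[j] = pstar C.getLastI + f * listLen L (C.drop j) := by
  rw [← h j hj, List.headI_drop hj]

lemma pstar_headI (h : HasLinearPotential L pstar f C) {j : ℕ} (hj : j < C.length) :
    pstar C.headI = pstar C[j] + f * listLen L (C.take (j + 1)) := by
  have h₀ := h 0 (by omega)
  rw [List.drop_zero] at h₀
  rw [h₀, h.pstar_getElem hj, listLen_eq_take_add_drop L C j]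
  ring

lemma pstar_getElem_le (h : HasLinearPotential L pstar f C) (hf : 0 ≤ f)
    (hL : ∀ p ∈ C.consecutivePairs, 0 ≤ L p.1 p.2) {m n : ℕ} (hmn : m ≤ n)
    (hn : n < C.length) : pstar C[n] ≤ pstar C[m] := by
  have hsplit := listLen_eq_take_add_drop L (C.drop m) (n - m)
  rw [List.drop_drop, Nat.add_sub_cancel' hmn] at hsplit
  have hseg : 0 ≤ listLen L ((C.drop m).take (n - m + 1)) := by
    refine listLen_nonneg fun p hp => hL p ?_
    rw [List.consecutivePairs_take_succ, List.consecutivePairs_drop] at hp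
    exact List.mem_of_mem_drop (List.mem_of_mem_take hp)
  rw [h.pstar_getElem hn, h.pstar_getElem (by omega), hsplit]
  nlinarith

end HasLinearPotential

/-- `X` runs down `C` to the attachment point `a`, starting at an earlier vertex or at the head of
`C`: it is `[a]` if `a` is itself earlier, and the prefix of `C` ending at `a` otherwise.
`IsLeadOut` is the mirror image, from `b` down to the end of `C`. -/
structure IsLeadIn (L : V → V → ℝ) (pstar : V → ℝ) (E : V → Prop) (f : ℝ)
    (C : List V) (a : V) (X : List V) : Prop where
  ne_nil : X ≠ []
  getLastI_eq : X.getLastI = a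
  nodup : X.Nodup
  consecutivePairs_subset : ∀ p ∈ X.consecutivePairs, p ∈ C.consecutivePairs
  dropLast_mem : ∀ v ∈ X.dropLast, v ∈ C ∧ pstar a ≤ pstar v
  not_tail : ∀ v ∈ X.tail, ¬ E v
  pstar_headI : pstar X.headI = pstar a + f * listLen L X
  headI : E X.headI ∨ X.headI = C.headI

structure IsLeadOut (L : V → V → ℝ) (pstar : V → ℝ) (E : V → Prop) (f : ℝ)
    (C : List V) (b : V) (Y : List V) : Prop where
  ne_nil : Y ≠ []
  headI_eq : Y.headI = b
  nodup : Y.Nodup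
  consecutivePairs_subset : ∀ p ∈ Y.consecutivePairs, p ∈ C.consecutivePairs
  tail_mem : ∀ v ∈ Y.tail, v ∈ C ∧ pstar v ≤ pstar b
  not_dropLast : ∀ v ∈ Y.dropLast, ¬ E v
  pstar_getLastI : pstar b = pstar Y.getLastI + f * listLen L Y
  getLastI : E Y.getLastI ∨ Y.getLastI = C.getLastI

variable {L : V → V → ℝ} {pstar : V → ℝ} {E : V → Prop} {f : ℝ} {C : List V}

lemma IsLeadIn.listLen_nonneg {a : V} {X : List V} (hX : IsLeadIn L pstar E f C a X)
    (hL : ∀ p ∈ C.consecutivePairs, 0 ≤ L p.1 p.2) : 0 ≤ listLen L X :=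
  _root_.listLen_nonneg fun p hp => hL p (hX.consecutivePairs_subset p hp)

lemma IsLeadOut.listLen_nonneg {b : V} {Y : List V} (hY : IsLeadOut L pstar E f C b Y)
    (hL : ∀ p ∈ C.consecutivePairs, 0 ≤ L p.1 p.2) : 0 ≤ listLen L Y :=
  _root_.listLen_nonneg fun p hp => hL p (hY.consecutivePairs_subset p hp)

lemma exists_isLeadIn (hlin : HasLinearPotential L pstar f C) (hf : 0 ≤ f)
    (hL : ∀ p ∈ C.consecutivePairs, 0 ≤ L p.1 p.2) (hC : C.Nodup)
    (hE : ∀ v ∈ C.tail.dropLast, ¬ E v) {a : V} (ha : E a ∨ a ∈ C) :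
    ∃ X, IsLeadIn L pstar E f C a X := by
  by_cases hEa : E a
  · exact ⟨[a], by simp, rfl, by simp, by simp, by simp, by simp, by simp [listLen],
      Or.inl hEa⟩
  obtain ⟨n, hn, rfl⟩ := List.mem_iff_getElem.1 (ha.resolve_left hEa)
  refine ⟨C.take (n + 1), by simpa using List.ne_nil_of_length_pos (by omega),
    List.getLastI_take_succ hn,
    hC.sublist (List.take_sublist _ _), fun p hp => ?_, fun v hv => ?_, fun v hv => ?_, ?_,
    Or.inr List.headI_take_succ⟩
  · rw [List.consecutivePairs_take_succ] at hp
    exact List.mem_of_mem_take hp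
  · rw [List.dropLast_eq_take, List.take_take] at hv
    obtain ⟨m, hm, rfl⟩ := List.mem_take_iff_getElem.1 hv
    exact ⟨List.getElem_mem _, hlin.pstar_getElem_le hf hL (by omega) hn⟩
  · rw [List.tail_take_eq_take_tail, Nat.add_sub_cancel] at hv
    obtain ⟨m, hm, rfl⟩ := List.mem_take_iff_getElem.1 hv
    rw [List.getElem_tail]
    by_cases hm' : m + 3 ≤ C.length
    · exact hE _ (List.getElem_mem_tail_dropLast (by omega) hm')
    · obtain rfl : n = m + 1 := by rw [List.length_tail] at hm; omega
      exact hEa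
  · rw [List.headI_take_succ, hlin.pstar_headI hn]

lemma exists_isLeadOut (hlin : HasLinearPotential L pstar f C) (hf : 0 ≤ f)
    (hL : ∀ p ∈ C.consecutivePairs, 0 ≤ L p.1 p.2) (hC : C.Nodup)
    (hE : ∀ v ∈ C.tail.dropLast, ¬ E v) {b : V} (hb : E b ∨ b ∈ C) :
    ∃ Y, IsLeadOut L pstar E f C b Y := by
  by_cases hEb : E b
  · exact ⟨[b], by simp, rfl, by simp, by simp, by simp, by simp,
      by simp [listLen, List.getLastI], Or.inl hEb⟩
  obtain ⟨n, hn, rfl⟩ := List.mem_iff_getElem.1 (hb.resolve_left hEb)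
  refine ⟨C.drop n, by simpa using hn, List.headI_drop hn,
    hC.sublist (List.drop_sublist _ _), fun p hp => ?_, fun v hv => ?_, fun v hv => ?_, ?_,
    Or.inr (List.getLastI_drop hn)⟩
  · rw [List.consecutivePairs_drop] at hp
    exact List.mem_of_mem_drop hp
  · rw [List.tail_drop] at hv
    obtain ⟨m, hm, rfl⟩ := List.mem_drop_iff_getElem.1 hv
    exact ⟨List.getElem_mem _, hlin.pstar_getElem_le hf hL (by omega) _⟩
  · rw [List.dropLast_eq_take] at hv
    obtain ⟨m, hm, rfl⟩ := List.mem_take_iff_getElem.1 hv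
    rw [List.getElem_drop]
    rcases Nat.eq_zero_or_pos m with rfl | hm₀
    · exact hEb
    · rw [List.length_drop] at hm
      exact hE _ (List.getElem_mem_tail_dropLast (by omega) (by omega))
  · rw [List.getLastI_drop hn, ← List.headI_drop hn]
    exact hlin n hn

def splice (X Q Y : List V) : List V := X ++ Q.tail ++ Y.tail

variable {G : SimpleGraph V} {X Q Y : List V} {a b : V}

lemma consecutivePairs_splice (hX : IsLeadIn L pstar E f C a X)
    (hY : IsLeadOut L pstar E f C b Y) (hQa : Q.headI = a) (hQb : Q.getLastI = b) :
    (splice X Q Y).consecutivePairs =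
      X.consecutivePairs ++ Q.consecutivePairs ++ Y.consecutivePairs := by
  have hXQ : X.getLastI = Q.headI := hX.getLastI_eq.trans hQa.symm
  rw [splice, List.consecutivePairs_append_tail (by simp [hX.ne_nil])
    (by rw [List.getLastI_append_tail hXQ, hQb, hY.headI_eq]),
    List.consecutivePairs_append_tail hX.ne_nil hXQ]

lemma mem_consecutivePairs_splice (hX : IsLeadIn L pstar E f C a X)
    (hY : IsLeadOut L pstar E f C b Y) (hQa : Q.headI = a) (hQb : Q.getLastI = b) {p : V × V}
    (hp : p ∈ (splice X Q Y).consecutivePairs) :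
    p ∈ C.consecutivePairs ∨ p ∈ Q.consecutivePairs := by
  rw [consecutivePairs_splice hX hY hQa hQb, List.mem_append, List.mem_append] at hp
  rcases hp with (hp | hp) | hp
  exacts [Or.inl (hX.consecutivePairs_subset p hp), Or.inr hp,
    Or.inl (hY.consecutivePairs_subset p hp)]

lemma listLen_splice (hX : IsLeadIn L pstar E f C a X) (hY : IsLeadOut L pstar E f C b Y)
    (hQa : Q.headI = a) (hQb : Q.getLastI = b) :
    listLen L (splice X Q Y) = listLen L X + listLen L Q + listLen L Y := by
  simp only [listLen_eq_sum, consecutivePairs_splice hX hY hQa hQb, List.map_append,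
    List.sum_append]

lemma headI_splice (hX : IsLeadIn L pstar E f C a X) : (splice X Q Y).headI = X.headI := by
  rw [splice, List.append_assoc, List.headI_append hX.ne_nil]

lemma getLastI_splice (hX : IsLeadIn L pstar E f C a X) (hY : IsLeadOut L pstar E f C b Y)
    (hQa : Q.headI = a) (hQb : Q.getLastI = b) : (splice X Q Y).getLastI = Y.getLastI := by
  rw [splice, List.getLastI_append_tail]
  rw [List.getLastI_append_tail (hX.getLastI_eq.trans hQa.symm), hQb, hY.headI_eq]

lemma mem_tail_dropLast_splice (hX : IsLeadIn L pstar E f C a X)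
    (hY : IsLeadOut L pstar E f C b Y) (hQ : 2 ≤ Q.length) (hQb : Q.getLastI = b) {v : V}
    (hv : v ∈ (splice X Q Y).tail.dropLast) :
    v ∈ X.tail ∨ v ∈ Q.tail.dropLast ∨ v ∈ Y.dropLast := by
  obtain ⟨x, X, rfl⟩ := List.exists_cons_of_ne_nil hX.ne_nil
  have hQt : Q.tail ≠ [] := List.ne_nil_of_length_pos (by rw [List.length_tail]; omega)
  rw [splice, List.append_assoc, List.tail_append_tail hQt hY.ne_nil (hQb.trans hY.headI_eq.symm),
    List.cons_append, List.tail_cons, ← List.append_assoc,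
    List.dropLast_append_of_ne_nil hY.ne_nil] at hv
  simpa [or_assoc] using hv

lemma nodup_splice (hX : IsLeadIn L pstar E f C a X) (hY : IsLeadOut L pstar E f C b Y)
    (hQ : Q.Nodup) (hQa : Q.headI = a) (hQb : Q.getLastI = b) (hab : pstar b < pstar a)
    (hQC : ∀ v ∈ Q.tail.dropLast, v ∉ C) : (splice X Q Y).Nodup := by
  have hQne : Q ≠ [] := fun h => hab.ne' (by rw [← hQa, ← hQb, h]; rfl)
  have hX' : ∀ x ∈ X, pstar a ≤ pstar x ∧ (x ∈ C ∨ x = a) := fun x hx => by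
    rcases List.mem_dropLast_or_eq_getLastI hx with h | h
    · exact ⟨(hX.dropLast_mem x h).2, Or.inl (hX.dropLast_mem x h).1⟩
    · rw [h, hX.getLastI_eq]; exact ⟨le_rfl, Or.inr rfl⟩
  have hQ' : ∀ y ∈ Q.tail, y ∉ C ∨ y = b := fun y hy =>
    (List.mem_tail_dropLast_or_eq_getLastI hy).imp (hQC y) (·.trans hQb)
  have ha : a ∉ Q.tail := hQa ▸ List.headI_not_mem_tail hQ hQne
  have hb : b ∉ Y.tail := hY.headI_eq ▸ List.headI_not_mem_tail hY.nodup hY.ne_nil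
  simp only [splice, List.nodup_append, List.mem_append]
  refine ⟨⟨hX.nodup, hQ.sublist (List.tail_sublist Q), ?_⟩,
    hY.nodup.sublist (List.tail_sublist Y), ?_⟩
  · rintro x hx y hy rfl
    obtain ⟨hax, hxC | rfl⟩ := hX' x hx <;> rcases hQ' x hy with hxC' | rfl
    · exact hxC' hxC
    · linarith
    · exact ha hy
    · linarith
  · rintro x hx y hy rfl
    obtain ⟨hxC, hxb⟩ := hY.tail_mem x hy
    rcases hx with hx | hx
    · linarith [(hX' x hx).1]
    · rcases hQ' x hx with hxC' | rfl
      · exact hxC' hxC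
      · exact hb hy

lemma isPathList_splice (hX : IsLeadIn L pstar E f C a X) (hY : IsLeadOut L pstar E f C b Y)
    (hC : C.IsChain G.Adj) (hQ : IsPathList G Q) (hQa : Q.headI = a) (hQb : Q.getLastI = b)
    (hab : pstar b < pstar a) (hQC : ∀ v ∈ Q.tail.dropLast, v ∉ C) :
    IsPathList G (splice X Q Y) := by
  refine ⟨List.isChain_iff_forall_mem_consecutivePairs.2 ?_,
    nodup_splice hX hY hQ.2.1 hQa hQb hab hQC, ?_⟩
  · intro p hp
    rcases mem_consecutivePairs_splice hX hY hQa hQb hp with hp | hp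
    · exact List.isChain_iff_forall_mem_consecutivePairs.1 hC p hp
    · exact List.isChain_iff_forall_mem_consecutivePairs.1 hQ.1 p hp
  · have := List.length_pos_of_ne_nil hX.ne_nil
    have := hQ.2.2
    simp only [splice, List.length_append, List.length_tail]
    omega

lemma pstar_sub_splice (hX : IsLeadIn L pstar E f C a X) (hY : IsLeadOut L pstar E f C b Y)
    (hQa : Q.headI = a) (hQb : Q.getLastI = b) :
    pstar (splice X Q Y).headI - pstar (splice X Q Y).getLastI =
      pstar a - pstar b + f * (listLen L X + listLen L Y) := by
  rw [headI_splice hX, getLastI_splice hX hY hQa hQb, hX.pstar_headI, hY.pstar_getLastI]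
  ring

lemma edgeIn_splice (hX : IsLeadIn L pstar E f C a X) (hY : IsLeadOut L pstar E f C b Y)
    (hQa : Q.headI = a) (hQb : Q.getLastI = b) {u v : V} (h : edgeIn (splice X Q Y) u v) :
    edgeIn C u v ∨ edgeIn Q u v := by
  rcases h with h | h
  · exact (mem_consecutivePairs_splice hX hY hQa hQb h).imp Or.inl Or.inl
  · exact (mem_consecutivePairs_splice hX hY hQa hQb h).imp Or.inr Or.inr

structure IsGreedyPathDecomposition (G : SimpleGraph V) (L : V → V → ℝ)
    (P : Fin (k + 1) → List V) (pstar : V → ℝ) : Prop where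
  pos_of_adj : ∀ u v, G.Adj u v → 0 < L u v
  isPathList : ∀ i, IsPathList G (P i)
  isShortest : ∀ l, IsPathList G l → l.headI = (P 0).headI → l.getLastI = (P 0).getLastI →
    listLen L (P 0) ≤ listLen L l ∧ (listLen L l = listLen L (P 0) → l = P 0)
  pathSlope_zero : pathSlope L pstar (P 0) = 1
  hasLinearPotential : ∀ i, HasLinearPotential L pstar (pathSlope L pstar (P i)) (P i)
  admissible : ∀ i : Fin (k + 1), 0 < (i : ℕ) → Admissible G pstar P i (P i)
  pathSlope_le : ∀ i : Fin (k + 1), 0 < (i : ℕ) → ∀ l, Admissible G pstar P i l →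
    pathSlope L pstar l ≤ pathSlope L pstar (P i)
  eq_of_pathSlope_eq : ∀ i : Fin (k + 1), 0 < (i : ℕ) → 0 < pathSlope L pstar (P i) →
    ∀ l, Admissible G pstar P i l → pathSlope L pstar l = pathSlope L pstar (P i) → l = P i

namespace IsGreedyPathDecomposition

lemma listLen_pos (hD : IsGreedyPathDecomposition G L P pstar) (i : Fin (k + 1)) :
    0 < listLen L (P i) :=
  _root_.listLen_pos hD.pos_of_adj (hD.isPathList i)

lemma pathSlope_nonneg (hD : IsGreedyPathDecomposition G L P pstar) (i : Fin (k + 1)) :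
    0 ≤ pathSlope L pstar (P i) := by
  rcases Nat.eq_zero_or_pos i with hi | hi
  · obtain rfl : i = 0 := Fin.ext hi
    rw [hD.pathSlope_zero]
    exact zero_le_one
  · exact div_nonneg (sub_nonneg.2 (hD.admissible i hi).2.2.2.1) (hD.listLen_pos i).le

lemma lengths_nonneg (hD : IsGreedyPathDecomposition G L P pstar) (i : Fin (k + 1)) :
    ∀ p ∈ (P i).consecutivePairs, 0 ≤ L p.1 p.2 := fun p hp =>
  (hD.pos_of_adj _ _ (List.isChain_iff_forall_mem_consecutivePairs.1 (hD.isPathList i).1 p hp)).le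

lemma not_onEarlier_of_mem_tail_dropLast (hD : IsGreedyPathDecomposition G L P pstar)
    (i : Fin (k + 1)) : ∀ v ∈ (P i).tail.dropLast, ¬ onEarlier P i v := by
  rcases Nat.eq_zero_or_pos i with hi | hi
  · obtain rfl : i = 0 := Fin.ext hi
    exact fun _ _ => not_onEarlier_zero
  · exact (hD.admissible i hi).2.2.2.2.1

lemma exists_isLeadIn (hD : IsGreedyPathDecomposition G L P pstar) (i : Fin (k + 1)) {a : V}
    (ha : onEarlier P i a ∨ a ∈ P i) :
    ∃ X, IsLeadIn L pstar (onEarlier P i) (pathSlope L pstar (P i)) (P i) a X :=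
  _root_.exists_isLeadIn (hD.hasLinearPotential i) (hD.pathSlope_nonneg i) (hD.lengths_nonneg i)
    (hD.isPathList i).2.1 (hD.not_onEarlier_of_mem_tail_dropLast i) ha

lemma exists_isLeadOut (hD : IsGreedyPathDecomposition G L P pstar) (i : Fin (k + 1)) {b : V}
    (hb : onEarlier P i b ∨ b ∈ P i) :
    ∃ Y, IsLeadOut L pstar (onEarlier P i) (pathSlope L pstar (P i)) (P i) b Y :=
  _root_.exists_isLeadOut (hD.hasLinearPotential i) (hD.pathSlope_nonneg i) (hD.lengths_nonneg i)
    (hD.isPathList i).2.1 (hD.not_onEarlier_of_mem_tail_dropLast i) hb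

lemma eq_first_of_isPathList (hD : IsGreedyPathDecomposition G L P pstar) {l Q : List V} {y : ℝ}
    (hl : IsPathList G l) (hhead : l.headI = (P 0).headI) (hlast : l.getLastI = (P 0).getLastI)
    (hlen : listLen L l = listLen L Q + y)
    (hsub : pstar l.headI - pstar l.getLastI = pstar Q.headI - pstar Q.getLastI + y)
    (hQ : 0 < listLen L Q) (hQslope : 1 ≤ pathSlope L pstar Q) : l = P 0 := by
  obtain ⟨hshort, huniq⟩ := hD.isShortest l hl hhead hlast
  have h₀ := pstar_sub_eq_pathSlope_mul (pstar := pstar) (hD.listLen_pos 0).ne'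
  rw [hD.pathSlope_zero, one_mul] at h₀
  rw [hhead, hlast, h₀, pstar_sub_eq_pathSlope_mul hQ.ne'] at hsub
  exact huniq (by nlinarith)

lemma eq_of_admissible (hD : IsGreedyPathDecomposition G L P pstar) {i : Fin (k + 1)}
    (hi : 0 < (i : ℕ)) {l Q : List V} {y : ℝ} (hl : Admissible G pstar P i l)
    (hlen : listLen L l = listLen L Q + y)
    (hsub : pstar l.headI - pstar l.getLastI =
      pstar Q.headI - pstar Q.getLastI + pathSlope L pstar (P i) * y)
    (hy : 0 ≤ y) (hQ : 0 < listLen L Q)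
    (hQslope : pathSlope L pstar (P i) ≤ pathSlope L pstar Q)
    (hpos : 0 < pathSlope L pstar Q) : l = P i := by
  have hl_slope : pathSlope L pstar l =
      (pathSlope L pstar Q * listLen L Q + pathSlope L pstar (P i) * y) / (listLen L Q + y) := by
    rw [pathSlope, hsub, hlen, pstar_sub_eq_pathSlope_mul hQ.ne']
  have hle := hD.pathSlope_le i hi l hl
  rw [hl_slope, div_le_iff₀ (by positivity)] at hle
  have hQeq : pathSlope L pstar Q = pathSlope L pstar (P i) := le_antisymm (by nlinarith) hQslope
  refine hD.eq_of_pathSlope_eq i hi (hQeq ▸ hpos) l hl ?_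
  rw [hl_slope, hQeq, ← mul_add, mul_div_assoc, div_self (by positivity), mul_one]

section Step

variable {i : Fin k}

lemma admissible_splice (hD : IsGreedyPathDecomposition G L P pstar) (hi : 0 < (i : ℕ))
    (hX : IsLeadIn L pstar (onEarlier P i.castSucc) (pathSlope L pstar (P i.castSucc))
      (P i.castSucc) (P i.succ).headI X)
    (hY : IsLeadOut L pstar (onEarlier P i.castSucc) (pathSlope L pstar (P i.castSucc))
      (P i.castSucc) (P i.succ).getLastI Y)
    (hpath : IsPathList G (splice X (P i.succ) Y))
    (hab : pstar (P i.succ).getLastI < pstar (P i.succ).headI)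
    (hy : 0 ≤ listLen L X + listLen L Y) :
    Admissible G pstar P i.castSucc (splice X (P i.succ) Y) := by
  have hC := hD.admissible i.castSucc hi
  have hQ := hD.admissible i.succ i.succ_pos
  refine ⟨hpath, ?_, ?_, ?_, fun v hv => ?_, fun u v huv j hj => ?_⟩
  · rw [headI_splice hX]
    exact hX.headI.elim id fun h => h ▸ hC.2.1
  · rw [getLastI_splice hX hY rfl rfl]
    exact hY.getLastI.elim id fun h => h ▸ hC.2.2.1
  · have := pstar_sub_splice hX hY rfl rfl
    nlinarith [hD.pathSlope_nonneg i.castSucc]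
  · rcases mem_tail_dropLast_splice hX hY (hD.isPathList _).2.2 rfl hv with h | h | h
    · exact hX.not_tail v h
    · exact fun hv' => hQ.2.2.2.2.1 v h (onEarlier_succ_iff.2 (Or.inl hv'))
    · exact hY.not_dropLast v h
  · rcases edgeIn_splice hX hY rfl rfl huv with h | h
    · exact hC.2.2.2.2.2 u v h j hj
    · exact hQ.2.2.2.2.2 u v h j (hj.trans Fin.castSucc_lt_succ)

lemma splice_eq_of_pathSlope_le (hD : IsGreedyPathDecomposition G L P pstar)
    (hX : IsLeadIn L pstar (onEarlier P i.castSucc) (pathSlope L pstar (P i.castSucc))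
      (P i.castSucc) (P i.succ).headI X)
    (hY : IsLeadOut L pstar (onEarlier P i.castSucc) (pathSlope L pstar (P i.castSucc))
      (P i.castSucc) (P i.succ).getLastI Y)
    (hle : pathSlope L pstar (P i.castSucc) ≤ pathSlope L pstar (P i.succ))
    (hpos : 0 < pathSlope L pstar (P i.succ)) :
    splice X (P i.succ) Y = P i.castSucc := by
  have hQ := hD.admissible i.succ i.succ_pos
  have hab : pstar (P i.succ).getLastI < pstar (P i.succ).headI := by
    have := pstar_sub_eq_pathSlope_mul (pstar := pstar) (hD.listLen_pos i.succ).ne'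
    nlinarith [hD.listLen_pos i.succ]
  have hpath := isPathList_splice hX hY (hD.isPathList _).1 (hD.isPathList _) rfl rfl hab
    fun v hv hvC => hQ.2.2.2.2.1 v hv (onEarlier_succ_iff.2 (Or.inr hvC))
  have hlen := listLen_splice hX hY rfl rfl
  have hsub := pstar_sub_splice hX hY rfl rfl
  have hy : 0 ≤ listLen L X + listLen L Y :=
    add_nonneg (hX.listLen_nonneg (hD.lengths_nonneg _)) (hY.listLen_nonneg (hD.lengths_nonneg _))
  rcases Nat.eq_zero_or_pos (i : ℕ) with hi | hi
  · have hi₀ : i.castSucc = 0 := Fin.ext hi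
    have hE : ∀ v, ¬ onEarlier P i.castSucc v := fun v => hi₀ ▸ not_onEarlier_zero
    have hhead : (splice X (P i.succ) Y).headI = (P i.castSucc).headI :=
      (headI_splice hX).trans (hX.headI.resolve_left (hE _))
    have hlast : (splice X (P i.succ) Y).getLastI = (P i.castSucc).getLastI :=
      (getLastI_splice hX hY rfl rfl).trans (hY.getLastI.resolve_left (hE _))
    have hf : pathSlope L pstar (P i.castSucc) = 1 := hi₀ ▸ hD.pathSlope_zero
    rw [hi₀] at hhead hlast hf hsub hle ⊢
    rw [hf, one_mul] at hsub
    exact hD.eq_first_of_isPathList hpath hhead hlast (by rw [hlen]; ring) hsub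
      (hD.listLen_pos _) (hf ▸ hle)
  · exact hD.eq_of_admissible hi (hD.admissible_splice hi hX hY hpath hab hy)
      (by rw [hlen]; ring) hsub hy (hD.listLen_pos _) hle hpos

theorem pathSlope_succ_lt (hD : IsGreedyPathDecomposition G L P pstar) (i : Fin k)
    (hpos : 0 < pathSlope L pstar (P i.succ)) :
    pathSlope L pstar (P i.succ) < pathSlope L pstar (P i.castSucc) := by
  by_contra! hle
  have hQ := hD.admissible i.succ i.succ_pos
  obtain ⟨X, hX⟩ := hD.exists_isLeadIn i.castSucc (onEarlier_succ_iff.1 hQ.2.1)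
  obtain ⟨Y, hY⟩ := hD.exists_isLeadOut i.castSucc (onEarlier_succ_iff.1 hQ.2.2.1)
  obtain ⟨p, hp⟩ := List.exists_mem_of_ne_nil _
    (List.consecutivePairs_ne_nil (hD.isPathList i.succ).2.2)
  refine hQ.2.2.2.2.2 p.1 p.2 (Or.inl hp) i.castSucc Fin.castSucc_lt_succ
    (Or.inl (?_ : p ∈ (P i.castSucc).consecutivePairs))
  rw [← hD.splice_eq_of_pathSlope_le hX hY hle hpos, consecutivePairs_splice hX hY rfl rfl]
  simp [hp]

end Step

end IsGreedyPathDecomposition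

end PathDecomposition

theorem path_decomposition_slopes_general (G : SimpleGraph V)
    (L : V → V → ℝ) (hL : ∀ u v, G.Adj u v → 0 < L u v)
    (s₀ s₁ : V)
    (k : ℕ) (P : Fin (k + 1) → List V) (pstar : V → ℝ)
    (hpath : ∀ i, IsPathList G (P i))
    (hP0 : (P 0).headI = s₀ ∧ (P 0).getLastI = s₁)
    (hshortest : ∀ l, IsPathList G l → l.headI = s₀ → l.getLastI = s₁ →
      listLen L (P 0) ≤ listLen L l ∧
      (listLen L l = listLen L (P 0) → l = P 0))
    (hf0 : pathSlope L pstar (P 0) = 1)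
    (hinterp : ∀ i, ∀ j : ℕ, j < (P i).length →
      pstar (((P i).drop j).headI) =
        pstar ((P i).getLastI) + pathSlope L pstar (P i) * listLen L ((P i).drop j))
    (hadm : ∀ i : Fin (k + 1), 0 < (i : ℕ) → Admissible G pstar P i (P i))
    (hmax : ∀ i : Fin (k + 1), 0 < (i : ℕ) → ∀ l, Admissible G pstar P i l →
      pathSlope L pstar l ≤ pathSlope L pstar (P i))
    (huniq : ∀ i : Fin (k + 1), 0 < (i : ℕ) → 0 < pathSlope L pstar (P i) →
      ∀ l, Admissible G pstar P i l → pathSlope L pstar l = pathSlope L pstar (P i) →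
        l = P i) :
    ∃ i₀ : Fin (k + 1),
      (∀ i, i ≤ i₀ → 0 < pathSlope L pstar (P i)) ∧
      (∀ i, i₀ < i → pathSlope L pstar (P i) = 0) ∧
      (∀ i j, i < j → j ≤ i₀ → pathSlope L pstar (P j) < pathSlope L pstar (P i)) := by
  have hD : IsGreedyPathDecomposition G L P pstar :=
    { pos_of_adj := hL
      isPathList := hpath
      isShortest := fun l hl hhead hlast =>
        hshortest l hl (hhead.trans hP0.1) (hlast.trans hP0.2)
      pathSlope_zero := hf0
      hasLinearPotential := hinterp
      admissible := hadm
      pathSlope_le := hmax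
      eq_of_pathSlope_eq := huniq }
  exact Fin.exists_pos_strictAnti_then_zero (hf0 ▸ one_pos) hD.pathSlope_nonneg
    hD.pathSlope_succ_lt

/-- Path decomposition lemma: for the greedy path decomposition `P₀, …, P_k`
(with `P₀` the unique shortest `s₀`-`s₁` path, pathSlope `f(P₀) = 1`, `p*` linear
along each `Pᵢ`, each `Pᵢ` a maximizer — unique when its pathSlope is positive —
of the pathSlope among admissible attachment paths), there is `i₀ ≤ k` with
`f(P₀) > f(P₁) > … > f(P_{i₀}) > 0 = f(P_{i₀+1}) = … = f(P_k)`. -/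
theorem path_decomposition_slopes (G : SimpleGraph V)
    (L : V → V → ℝ) (hL : ∀ u v, G.Adj u v → 0 < L u v)
    (hLsymm : ∀ u v, L u v = L v u)
    (s₀ s₁ : V) (hne : s₀ ≠ s₁)
    (k : ℕ) (P : Fin (k + 1) → List V) (pstar : V → ℝ)
    (hpath : ∀ i, IsPathList G (P i))
    (hP0 : (P 0).headI = s₀ ∧ (P 0).getLastI = s₁)
    (hshortest : ∀ l, IsPathList G l → l.headI = s₀ → l.getLastI = s₁ →
      listLen L (P 0) ≤ listLen L l ∧
      (listLen L l = listLen L (P 0) → l = P 0))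
    (hf0 : pathSlope L pstar (P 0) = 1)
    (hinterp : ∀ i, ∀ j : ℕ, j < (P i).length →
      pstar (((P i).drop j).headI) =
        pstar ((P i).getLastI) + pathSlope L pstar (P i) * listLen L ((P i).drop j))
    (hadm : ∀ i : Fin (k + 1), 0 < (i : ℕ) → Admissible G pstar P i (P i))
    (hmax : ∀ i : Fin (k + 1), 0 < (i : ℕ) → ∀ l, Admissible G pstar P i l →
      pathSlope L pstar l ≤ pathSlope L pstar (P i))
    (huniq : ∀ i : Fin (k + 1), 0 < (i : ℕ) → 0 < pathSlope L pstar (P i) →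
      ∀ l, Admissible G pstar P i l → pathSlope L pstar l = pathSlope L pstar (P i) →
        l = P i)
    (hcover : ∀ u v, G.Adj u v → ∃ i, edgeIn (P i) u v) :
    ∃ i₀ : Fin (k + 1),
      (∀ i, i ≤ i₀ → 0 < pathSlope L pstar (P i)) ∧
      (∀ i, i₀ < i → pathSlope L pstar (P i) = 0) ∧
      (∀ i j, i < j → j ≤ i₀ → pathSlope L pstar (P j) < pathSlope L pstar (P i)) :=
  path_decomposition_slopes_general G L hL s₀ s₁ k P pstar hpath hP0 hshortest hf0 hinterp hadm hmax
    huniq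
end

section
/- In the Wheatstone graph Physarum dynamics with x_a* < x_b*: (i) the region {x_a > x_b*, x_b > x_b*} and (by symmetry) {x_a < x_a*, x_b < x_a*} are not entered from outside; (ii) in the region x_a, x_b ∈ [x_a*, x_b*], x_a decreases and x_b increases; hence the direction of the middle edge can change at most once inside this region. -/
/-!
Along the flow, `x_a' = α (x_a* - x_a) + β (x_a* - x_b)` and
`x_b' = γ (x_b* - x_b) + δ (x_b* - x_a)` with `α, β, γ, δ ≥ 0`. Above `x_b*` both coordinates
are therefore nonincreasing, below `x_a*` both are nondecreasing, and in the box `[x_a*, x_b*]²`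
the coordinate `x_a` decreases while `x_b` increases, so `x_a ≤ x_b` persists there. A corner is
never entered because on the last stretch before an entry time both coordinates would move away
from it.
-/

/-- The denominator `S` in the Wheatstone-graph dynamics. -/
noncomputable def Sden (Ca Cb Cc Cd Ce : ℝ → ℝ) (t : ℝ) : ℝ :=
  Ca t * Cb t * (Cc t + Cd t) + (Ca t + Cb t) * Cc t * Cd t +
    (Ca t + Cb t) * (Cc t + Cd t) * Ce t

open Set

lemma exists_last_le_of_continuous {h : ℝ → ℝ} (hh : Continuous h) {c t₀ t : ℝ} (ht : t₀ ≤ t)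
    (h0 : h t₀ ≤ c) : ∃ u ∈ Icc t₀ t, h u ≤ c ∧ ∀ s ∈ Ioc u t, c < h s := by
  obtain ⟨u, ⟨hu, huc⟩, hmax⟩ :=
    (isCompact_Icc.inter_right (isClosed_le hh continuous_const)).exists_isGreatest
      ⟨t₀, left_mem_Icc.2 ht, h0⟩
  exact ⟨u, hu, huc, fun s hs => lt_of_not_ge fun hsc =>
    hs.1.not_ge (hmax ⟨⟨hu.1.trans hs.1.le, hs.2⟩, hsc⟩)⟩

lemma not_lt_and_lt_of_deriv_nonpos {f g : ℝ → ℝ} {c : ℝ} (hf : Differentiable ℝ f)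
    (hg : Differentiable ℝ g)
    (hfg : ∀ s, c < f s → c < g s → deriv f s ≤ 0 ∧ deriv g s ≤ 0) {t₀ t : ℝ} (ht : t₀ ≤ t)
    (h0 : ¬(c < f t₀ ∧ c < g t₀)) : ¬(c < f t ∧ c < g t) := by
  rintro ⟨hft, hgt⟩
  have hmin : min (f t₀) (g t₀) ≤ c := by
    rw [min_le_iff]
    by_contra! h
    exact h0 h
  obtain ⟨u, hu, huc, hafter⟩ :=
    exists_last_le_of_continuous (hf.continuous.min hg.continuous) ht hmin
  have hut : u < t := hu.2.lt_of_ne (by rintro rfl; exact huc.not_gt (lt_min hft hgt))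
  have hderiv : ∀ s ∈ interior (Icc u t), deriv f s ≤ 0 ∧ deriv g s ≤ 0 := by
    rw [interior_Icc]
    intro s hs
    obtain ⟨hfs, hgs⟩ := lt_min_iff.1 (hafter s ⟨hs.1, hs.2.le⟩)
    exact hfg s hfs hgs
  have hfu := antitoneOn_of_deriv_nonpos (convex_Icc u t) hf.continuous.continuousOn
    hf.differentiableOn (fun s hs => (hderiv s hs).1) (left_mem_Icc.2 hut.le)
    (right_mem_Icc.2 hut.le) hut.le
  have hgu := antitoneOn_of_deriv_nonpos (convex_Icc u t) hg.continuous.continuousOn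
    hg.differentiableOn (fun s hs => (hderiv s hs).2) (left_mem_Icc.2 hut.le)
    (right_mem_Icc.2 hut.le) hut.le
  exact huc.not_gt (lt_min (hft.trans_le hfu) (hgt.trans_le hgu))

def IsDrivenToward (f g : ℝ → ℝ) (p : ℝ) : Prop :=
  ∀ t, ∃ α β : ℝ, 0 ≤ α ∧ 0 ≤ β ∧ HasDerivAt f (α * (p - f t) + β * (p - g t)) t

namespace IsDrivenToward

variable {f g : ℝ → ℝ} {p q : ℝ}

lemma differentiable (hf : IsDrivenToward f g p) : Differentiable ℝ f := fun t =>
  let ⟨_, _, _, _, h⟩ := hf t; h.differentiableAt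

lemma neg (hf : IsDrivenToward f g p) : IsDrivenToward (-f) (-g) (-p) := fun t => by
  obtain ⟨α, β, hα, hβ, h⟩ := hf t
  refine ⟨α, β, hα, hβ, h.neg.congr_deriv ?_⟩
  simp only [Pi.neg_apply]
  ring

lemma deriv_nonpos (hf : IsDrivenToward f g p) {t : ℝ} (hft : p ≤ f t) (hgt : p ≤ g t) :
    deriv f t ≤ 0 := by
  obtain ⟨α, β, hα, hβ, h⟩ := hf t
  rw [h.deriv]
  nlinarith

lemma deriv_nonneg (hf : IsDrivenToward f g p) {t : ℝ} (hft : f t ≤ p) (hgt : g t ≤ p) :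
    0 ≤ deriv f t := by
  obtain ⟨α, β, hα, hβ, h⟩ := hf t
  rw [h.deriv]
  nlinarith

lemma not_enter_upper_corner (hf : IsDrivenToward f g p) (hg : IsDrivenToward g f q)
    (hpq : p ≤ q) {t₀ t : ℝ} (ht : t₀ ≤ t) (h0 : ¬(q < f t₀ ∧ q < g t₀)) : ¬(q < f t ∧ q < g t) :=
  not_lt_and_lt_of_deriv_nonpos hf.differentiable hg.differentiable
    (fun _ hfs hgs => ⟨hf.deriv_nonpos (hpq.trans hfs.le) (hpq.trans hgs.le),
      hg.deriv_nonpos hgs.le hfs.le⟩) ht h0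

lemma not_enter_lower_corner (hf : IsDrivenToward f g p) (hg : IsDrivenToward g f q)
    (hpq : p ≤ q) {t₀ t : ℝ} (ht : t₀ ≤ t) (h0 : ¬(f t₀ < p ∧ g t₀ < p)) :
    ¬(f t < p ∧ g t < p) := by
  have := hg.neg.not_enter_upper_corner hf.neg (neg_le_neg hpq) ht
  simp only [Pi.neg_apply, neg_lt_neg_iff] at this
  exact fun h => this (fun h' => h0 h'.symm) h.symm

lemma le_preserved_in_box (hf : IsDrivenToward f g p) (hg : IsDrivenToward g f q) {t₁ t₂ : ℝ}
    (ht : t₁ ≤ t₂) (hbox : ∀ s, t₁ ≤ s → s ≤ t₂ → p ≤ f s ∧ f s ≤ q ∧ p ≤ g s ∧ g s ≤ q)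
    (h₁ : f t₁ ≤ g t₁) : f t₂ ≤ g t₂ := by
  have hbox' : ∀ s ∈ interior (Icc t₁ t₂), p ≤ f s ∧ f s ≤ q ∧ p ≤ g s ∧ g s ≤ q := by
    rw [interior_Icc]
    exact fun s hs => hbox s hs.1.le hs.2.le
  have hfa := antitoneOn_of_deriv_nonpos (convex_Icc t₁ t₂)
    hf.differentiable.continuous.continuousOn hf.differentiable.differentiableOn
    (fun s hs => hf.deriv_nonpos (hbox' s hs).1 (hbox' s hs).2.2.1)
    (left_mem_Icc.2 ht) (right_mem_Icc.2 ht) ht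
  have hgm := monotoneOn_of_deriv_nonneg (convex_Icc t₁ t₂)
    hg.differentiable.continuous.continuousOn hg.differentiable.differentiableOn
    (fun s hs => hg.deriv_nonneg (hbox' s hs).2.2.2 (hbox' s hs).2.1)
    (left_mem_Icc.2 ht) (right_mem_Icc.2 ht) ht
  linarith

end IsDrivenToward

lemma Sden_swap (Ca Cb Cc Cd Ce : ℝ → ℝ) : Sden Cb Ca Cd Cc Ce = Sden Ca Cb Cc Cd Ce := by
  funext t
  unfold Sden
  ring

lemma isDrivenToward_conductance_ratio {Ca Cb Cc Cd Ce : ℝ → ℝ} {La Lc : ℝ}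
    (hLa : 0 < La) (hLc : 0 < Lc) (ha : ∀ t, 0 < Ca t) (hb : ∀ t, 0 < Cb t)
    (hc : ∀ t, 0 < Cc t) (hd : ∀ t, 0 < Cd t) (he : ∀ t, 0 < Ce t)
    (hdynA : ∀ t, HasDerivAt Ca (Ca t / (Sden Ca Cb Cc Cd Ce t * La) *
      (Cb t * Cc t + Cc t * Cd t + Cc t * Ce t + Cd t * Ce t) - Ca t) t)
    (hdynC : ∀ t, HasDerivAt Cc (Cc t / (Sden Ca Cb Cc Cd Ce t * Lc) *
      (Ca t * Cd t + Ca t * Cb t + Ca t * Ce t + Cb t * Ce t) - Cc t) t) :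
    IsDrivenToward (fun t => Cc t / (Ca t + Cc t)) (fun t => Cd t / (Cb t + Cd t))
      (La / (La + Lc)) := by
  intro t
  have hS : 0 < Sden Ca Cb Cc Cd Ce t := by
    have := ha t; have := hb t; have := hc t; have := hd t; have := he t
    unfold Sden; positivity
  have hac : 0 < Ca t + Cc t := add_pos (ha t) (hc t)
  have hbd : 0 < Cb t + Cd t := add_pos (hb t) (hd t)
  -- The quotient rule gives `x_a' = Ca Cc ((Cb+Cd+Ce)(Ca La - Cc Lc) + Ce (Cb La - Cd Lc)) /
  -- (S La Lc (Ca+Cc)²)`, and `Ca La - Cc Lc = (Ca+Cc)(La+Lc)(x_a* - x_a)`,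
  -- `Cb La - Cd Lc = (Cb+Cd)(La+Lc)(x_a* - x_b)`.
  set k := Ca t * Cc t * (La + Lc) / (Sden Ca Cb Cc Cd Ce t * La * Lc * (Ca t + Cc t))
  have hk : 0 ≤ k := by have := ha t; have := hc t; positivity
  refine ⟨k * (Cb t + Cd t + Ce t), k * Ce t * (Cb t + Cd t) / (Ca t + Cc t),
    by have := hb t; have := hd t; have := he t; positivity,
    by have := he t; positivity, ?_⟩
  refine ((hdynC t).div ((hdynA t).add (hdynC t)) hac.ne').congr_deriv ?_
  simp only [k, Pi.add_apply]
  field_simp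
  unfold Sden
  ring

theorem wheatstone_regimes_general (La Lb Lc Ld : ℝ)
    (hLa : 0 < La) (hLb : 0 < Lb) (hLc : 0 < Lc) (hLd : 0 < Ld)
    (Ca Cb Cc Cd Ce : ℝ → ℝ)
    (hpos : ∀ t, 0 < Ca t ∧ 0 < Cb t ∧ 0 < Cc t ∧ 0 < Cd t ∧ 0 < Ce t)
    (hdynA : ∀ t, HasDerivAt Ca (Ca t / (Sden Ca Cb Cc Cd Ce t * La) *
      (Cb t * Cc t + Cc t * Cd t + Cc t * Ce t + Cd t * Ce t) - Ca t) t)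
    (hdynB : ∀ t, HasDerivAt Cb (Cb t / (Sden Ca Cb Cc Cd Ce t * Lb) *
      (Ca t * Cd t + Cd t * Cc t + Cd t * Ce t + Cc t * Ce t) - Cb t) t)
    (hdynC : ∀ t, HasDerivAt Cc (Cc t / (Sden Ca Cb Cc Cd Ce t * Lc) *
      (Ca t * Cd t + Ca t * Cb t + Ca t * Ce t + Cb t * Ce t) - Cc t) t)
    (hdynD : ∀ t, HasDerivAt Cd (Cd t / (Sden Ca Cb Cc Cd Ce t * Ld) *
      (Cb t * Cc t + Cb t * Ca t + Cb t * Ce t + Ca t * Ce t) - Cd t) t)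
    (xa xb : ℝ → ℝ)
    (hxa : ∀ t, xa t = Cc t / (Ca t + Cc t))
    (hxb : ∀ t, xb t = Cd t / (Cb t + Cd t))
    (xas xbs : ℝ)
    (hxas : xas = La / (La + Lc)) (hxbs : xbs = Lb / (Lb + Ld))
    (hlt : xas < xbs) :
    -- (i) the two corner regions cannot be entered
    (∀ t₀ t, t₀ ≤ t → ¬(xbs < xa t₀ ∧ xbs < xb t₀) →
      ¬(xbs < xa t ∧ xbs < xb t)) ∧
    (∀ t₀ t, t₀ ≤ t → ¬(xa t₀ < xas ∧ xb t₀ < xas) →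
      ¬(xa t < xas ∧ xb t < xas)) ∧
    -- (ii) monotonicity in the middle region
    (∀ t, xas ≤ xa t → xa t ≤ xbs → xas ≤ xb t → xb t ≤ xbs →
      deriv xa t ≤ 0 ∧ 0 ≤ deriv xb t) ∧
    -- hence the middle-edge direction changes at most once in this region
    (∀ t₁ t₂, t₁ ≤ t₂ →
      (∀ s, t₁ ≤ s → s ≤ t₂ →
        xas ≤ xa s ∧ xa s ≤ xbs ∧ xas ≤ xb s ∧ xb s ≤ xbs) →
      xa t₁ ≤ xb t₁ → xa t₂ ≤ xb t₂) := by
  have ha t := (hpos t).1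
  have hb t := (hpos t).2.1
  have hc t := (hpos t).2.2.1
  have hd t := (hpos t).2.2.2.1
  have he t := (hpos t).2.2.2.2
  obtain rfl : xa = _ := funext hxa
  obtain rfl : xb = _ := funext hxb
  subst hxas hxbs
  have hfa := isDrivenToward_conductance_ratio hLa hLc ha hb hc hd he hdynA hdynC
  have hfb := isDrivenToward_conductance_ratio hLb hLd hb ha hd hc he
    (by simpa only [Sden_swap] using hdynB) (by simpa only [Sden_swap] using hdynD)
  exact ⟨fun _ _ => hfa.not_enter_upper_corner hfb hlt.le,
    fun _ _ => hfa.not_enter_lower_corner hfb hlt.le,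
    fun _ h₁ h₂ h₃ h₄ => ⟨hfa.deriv_nonpos h₁ h₃, hfb.deriv_nonneg h₄ h₂⟩,
    fun _ _ => hfa.le_preserved_in_box hfb⟩

/-- Wheatstone graph, Physarum dynamics on the conductances
`C_x = D_x/L_x` (Miyaji–Ohnishi equations), with `x_a = C_c/(C_a+C_c)`,
`x_b = C_d/(C_b+C_d)`, `x_a* = L_a/(L_a+L_c)`, `x_b* = L_b/(L_b+L_d)` and
`x_a* < x_b*`:
(i) the region `{x_a > x_b*, x_b > x_b*}` and, by symmetry, the region
`{x_a < x_a*, x_b < x_a*}` cannot be entered from outside;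
(ii) in the region `x_a, x_b ∈ [x_a*, x_b*]`, `x_a` decreases and `x_b`
increases; hence the direction of the middle edge changes at most once while
the state remains in this region. -/
theorem wheatstone_regimes (La Lb Lc Ld Le : ℝ)
    (hLa : 0 < La) (hLb : 0 < Lb) (hLc : 0 < Lc) (hLd : 0 < Ld)
    (hLe : 0 < Le)
    (Ca Cb Cc Cd Ce : ℝ → ℝ)
    (hpos : ∀ t, 0 < Ca t ∧ 0 < Cb t ∧ 0 < Cc t ∧ 0 < Cd t ∧ 0 < Ce t)
    (hCe : Continuous Ce)
    (hdynA : ∀ t, HasDerivAt Ca (Ca t / (Sden Ca Cb Cc Cd Ce t * La) *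
      (Cb t * Cc t + Cc t * Cd t + Cc t * Ce t + Cd t * Ce t) - Ca t) t)
    (hdynB : ∀ t, HasDerivAt Cb (Cb t / (Sden Ca Cb Cc Cd Ce t * Lb) *
      (Ca t * Cd t + Cd t * Cc t + Cd t * Ce t + Cc t * Ce t) - Cb t) t)
    (hdynC : ∀ t, HasDerivAt Cc (Cc t / (Sden Ca Cb Cc Cd Ce t * Lc) *
      (Ca t * Cd t + Ca t * Cb t + Ca t * Ce t + Cb t * Ce t) - Cc t) t)
    (hdynD : ∀ t, HasDerivAt Cd (Cd t / (Sden Ca Cb Cc Cd Ce t * Ld) *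
      (Cb t * Cc t + Cb t * Ca t + Cb t * Ce t + Ca t * Ce t) - Cd t) t)
    (xa xb : ℝ → ℝ)
    (hxa : ∀ t, xa t = Cc t / (Ca t + Cc t))
    (hxb : ∀ t, xb t = Cd t / (Cb t + Cd t))
    (xas xbs : ℝ)
    (hxas : xas = La / (La + Lc)) (hxbs : xbs = Lb / (Lb + Ld))
    (hlt : xas < xbs) :
    -- (i) the two corner regions cannot be entered
    (∀ t₀ t, t₀ ≤ t → ¬(xbs < xa t₀ ∧ xbs < xb t₀) →
      ¬(xbs < xa t ∧ xbs < xb t)) ∧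
    (∀ t₀ t, t₀ ≤ t → ¬(xa t₀ < xas ∧ xb t₀ < xas) →
      ¬(xa t < xas ∧ xb t < xas)) ∧
    -- (ii) monotonicity in the middle region
    (∀ t, xas ≤ xa t → xa t ≤ xbs → xas ≤ xb t → xb t ≤ xbs →
      deriv xa t ≤ 0 ∧ 0 ≤ deriv xb t) ∧
    -- hence the middle-edge direction changes at most once in this region
    (∀ t₁ t₂, t₁ ≤ t₂ →
      (∀ s, t₁ ≤ s → s ≤ t₂ →
        xas ≤ xa s ∧ xa s ≤ xbs ∧ xas ≤ xb s ∧ xb s ≤ xbs) →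
      xa t₁ ≤ xb t₁ → xa t₂ ≤ xb t₂) :=
  wheatstone_regimes_general La Lb Lc Ld hLa hLb hLc hLd Ca Cb Cc Cd Ce hpos hdynA hdynB hdynC hdynD
    xa xb hxa hxb xas xbs hxas hxbs hlt
end
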